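/- arXiv:2506.11396 — 8 statements merged into one kernel-verified Lean document; each statement's English description precedes it below -/
import Mathlib

section
/- If G is a finite permutation group on a set Ω of size 2n with exactly two orbits, each of length n, where n = pq with p > q primes and q does not divide p − 1, then G contains a derangement. -/
open MulAction Pointwise

private lemma sq_not_dvd_factorial {p : ℕ} (hp : p.Prime) : ¬ (p * p ∣ Nat.factorial p) := by
  intro h
  have hfac : p * Nat.factorial (p - 1) = Nat.factorial p := Nat.mul_factorial_pred hp.ne_zero
  rw [← hfac] at h
  have h1 : p ∣ Nat.factorial (p - 1) := (mul_dvd_mul_iff_left (a := p) hp.pos.ne').mp h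
  have h2 := (Nat.Prime.dvd_factorial hp).mp h1
  have := hp.pos
  omega

private lemma exists_notMem_pair {X : Type*} [Group X] {A B : Subgroup X}
    (hA : A ≠ ⊤) (hB : B ≠ ⊤) : ∃ x : X, x ∉ A ∧ x ∉ B := by
  obtain ⟨a, ha⟩ : ∃ a, a ∉ A := by
    by_contra h; push_neg at h; exact hA ((Subgroup.eq_top_iff' A).mpr h)
  obtain ⟨b, hb⟩ : ∃ b, b ∉ B := by
    by_contra h; push_neg at h; exact hB ((Subgroup.eq_top_iff' B).mpr h)
  by_cases hab : a ∈ B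
  · by_cases hba : b ∈ A
    · refine ⟨a * b, fun h => ?_, fun h => ?_⟩
      · exact ha (by simpa using A.mul_mem h (A.inv_mem hba))
      · exact hb (by simpa using B.mul_mem (B.inv_mem hab) h)
    · exact ⟨b, hba, hb⟩
  · exact ⟨a, ha, hab⟩

private lemma normal_of_index_prime {p : ℕ} (hp : p.Prime) {X : Type*} [Group X] [Finite X]
    (hX : IsPGroup p X) {S : Subgroup X} (hS : S.index = p) : S.Normal := by
  classical
  haveI : Fact p.Prime := ⟨hp⟩
  set f := MulAction.toPermHom X (X ⧸ S) with hf
  have hker : f.ker ≤ S := by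
    intro x hx
    have h1 : f x = 1 := hx
    have h2 : x • ((1 : X) : X ⧸ S) = ((1 : X) : X ⧸ S) := by
      have := congrArg (fun (e : Equiv.Perm (X ⧸ S)) => e ((1 : X) : X ⧸ S)) h1
      simpa [hf, MulAction.toPermHom] using this
    have h3 : x ∈ MulAction.stabilizer X ((1 : X) : X ⧸ S) := h2
    rwa [MulAction.stabilizer_quotient] at h3
  -- index of the kernel is a p-power dividing p!
  have hcard : Nat.card (X ⧸ S) = p := hS
  have hkerindex : f.ker.index ∣ Nat.card (Equiv.Perm (X ⧸ S)) := by
    have : f.ker.index = Nat.card f.range := by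
      rw [Subgroup.index]
      exact Nat.card_congr (QuotientGroup.quotientKerEquivRange f).toEquiv
    rw [this]
    exact Subgroup.card_subgroup_dvd_card f.range
  have hperm : Nat.card (Equiv.Perm (X ⧸ S)) = Nat.factorial p := by
    haveI : Fintype (X ⧸ S) := Fintype.ofFinite _
    rw [Nat.card_eq_fintype_card, Fintype.card_perm, ← Nat.card_eq_fintype_card, hcard]
  obtain ⟨n, hn⟩ := IsPGroup.iff_card.mp hX
  obtain ⟨j, hjn, hj⟩ := (Nat.dvd_prime_pow hp).mp (hn ▸ Subgroup.index_dvd_card (G := X) f.ker)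
  have hj1 : j ≤ 1 := by
    by_contra hj2
    have : p * p ∣ f.ker.index := by
      rw [hj]
      have : p * p = p ^ 2 := by ring
      rw [this]
      exact pow_dvd_pow p (by omega)
    exact sq_not_dvd_factorial hp (this.trans (hperm ▸ hkerindex))
  have hSdvd : S.index ∣ f.ker.index := Subgroup.index_dvd_of_le hker
  have hjeq : f.ker.index = p := by
    interval_cases j
    · exfalso; rw [hj, hS] at hSdvd
      have : p = 1 := Nat.eq_one_of_dvd_one (by simpa using hSdvd)
      exact hp.one_lt.ne' this
    · simpa using hj
  -- conclude S = ker f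
  have hrel : f.ker.relIndex S * S.index = f.ker.index := Subgroup.relIndex_mul_index hker
  rw [hS, hjeq] at hrel
  have : f.ker.relIndex S = 1 := by
    have := hp.pos
    rcases Nat.eq_zero_or_pos (f.ker.relIndex S) with h0 | h0
    · rw [h0, zero_mul] at hrel; omega
    · nlinarith [hrel]
  have hle : S ≤ f.ker := Subgroup.relIndex_eq_one.mp this
  have : S = f.ker := le_antisymm hle hker
  rw [this]
  exact f.normal_ker

private lemma exists_notMem_of_cover {X : Type*} [Group X] [Fintype X] {p : ℕ} (hp2 : 2 ≤ p)
    (S : Finset (Subgroup X)) (hidx : ∀ H ∈ S, H.index = p) (hcard : S.card ≤ p) :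
    ∃ x : X, ∀ H ∈ S, x ∉ H := by
  classical
  by_contra hcon
  push_neg at hcon
  rcases Finset.eq_empty_or_nonempty S with hS | ⟨H₀, hH₀⟩
  · obtain ⟨H, hH, _⟩ := hcon 1
    rw [hS] at hH; simp at hH
  -- all subgroups in S have the same cardinality c
  set c : ℕ := Nat.card H₀ with hc
  have hcX : p * c = Nat.card X := by
    have := Subgroup.index_mul_card (H := H₀)
    rw [hidx H₀ hH₀] at this
    exact this
  have hcall : ∀ H ∈ S, Nat.card H = c := by
    intro H hH
    have h1 := Subgroup.index_mul_card (H := H)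
    rw [hidx H hH] at h1
    have hp0 : 0 < p := by omega
    have h2 : p * c = p * Nat.card H := hcX.trans h1.symm
    exact (Nat.eq_of_mul_eq_mul_left hp0 h2).symm
  -- the union bound
  set U : Finset X := S.biUnion (fun H => (Set.toFinset (H : Set X)).erase 1) with hU
  have hcover : Finset.univ.erase (1 : X) ⊆ U := by
    intro x hx
    rw [Finset.mem_erase] at hx
    obtain ⟨H, hH, hxH⟩ := hcon x
    rw [hU, Finset.mem_biUnion]
    exact ⟨H, hH, by rw [Finset.mem_erase]; exact ⟨hx.1, by rw [Set.mem_toFinset]; exact hxH⟩⟩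
  have hUcard : U.card ≤ S.card * (c - 1) := by
    calc U.card ≤ ∑ H ∈ S, ((Set.toFinset (H : Set X)).erase 1).card := Finset.card_biUnion_le
    _ ≤ ∑ H ∈ S, (c - 1) := by
        refine Finset.sum_le_sum ?_
        intro H hH
        have h1 : (1 : X) ∈ Set.toFinset (H : Set X) := by rw [Set.mem_toFinset]; exact H.one_mem
        rw [Finset.card_erase_of_mem h1]
        have h2 : (Set.toFinset (H : Set X)).card = Nat.card H := by
          rw [Set.toFinset_card, Nat.card_eq_fintype_card]
          rfl
        rw [h2, hcall H hH]
    _ = S.card * (c - 1) := by rw [Finset.sum_const, smul_eq_mul]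
  have hXcard : Nat.card X - 1 ≤ U.card := by
    have := Finset.card_le_card hcover
    rwa [Finset.card_erase_of_mem (Finset.mem_univ 1), Finset.card_univ,
      ← Nat.card_eq_fintype_card] at this
  have hc1 : 1 ≤ c := Nat.one_le_iff_ne_zero.mpr (Nat.card_ne_zero.mpr ⟨⟨1, H₀.one_mem⟩, inferInstance⟩)
  have hSc : S.card * (c - 1) ≤ p * (c-1) := Nat.mul_le_mul_right _ hcard
  have hmul : p * (c - 1) + p = p * c := by
    have h3 : c - 1 + 1 = c := by omega
    calc p * (c-1) + p = p * (c - 1 + 1) := by ring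
    _ = p * c := by rw [h3]
  omega

private lemma prime_dvd_card_invariant {p : ℕ} (hp : p.Prime) {G Ω : Type*} [Group G]
    [MulAction G Ω] [Finite Ω] (P : Subgroup G) (hP : IsPGroup p ↥P) (s : Set Ω)
    (hinv : ∀ u : ↥P, ∀ δ ∈ s, (u : G) • δ ∈ s)
    (hnf : ∀ δ ∈ s, ∃ u : ↥P, (u : G) • δ ≠ δ) : p ∣ Nat.card s := by
  classical
  haveI : Fact p.Prime := ⟨hp⟩
  let A : SubMulAction ↥P Ω :=
    { carrier := s
      smul_mem' := fun u δ hδ => hinv u δ hδ }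
  have hmod := hP.card_modEq_card_fixedPoints A
  have h0 : Nat.card (MulAction.fixedPoints ↥P A) = 0 := by
    rw [Nat.card_eq_zero]
    left
    rw [isEmpty_iff]
    rintro ⟨⟨δ, hδ⟩, hfix⟩
    obtain ⟨u, hu⟩ := hnf δ hδ
    have h1 := hfix u
    apply hu
    have h2 := congrArg (Subtype.val) h1
    exact h2
  rw [h0] at hmod
  have : Nat.card A = Nat.card s := rfl
  rw [this] at hmod
  exact (Nat.modEq_zero_iff_dvd).mp hmod

private lemma mem_mapconj_iff {G : Type*} [Group G] {n x : G} {H : Subgroup G} :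
    x ∈ H.map (MulAut.conj n).toMonoidHom ↔ n⁻¹ * x * n ∈ H := by
  rw [Subgroup.mem_map_equiv]
  simp

private lemma mapconj_comp {G : Type*} [Group G] (a b : G) (H : Subgroup G) :
    (H.map (MulAut.conj a).toMonoidHom).map (MulAut.conj b).toMonoidHom
      = H.map (MulAut.conj (b * a)).toMonoidHom := by
  rw [Subgroup.map_map]
  congr 1
  ext x
  simp only [MonoidHom.comp_apply, MulEquiv.coe_toMonoidHom, MulAut.conj_apply]
  group

private lemma mapconj_eq_self_of_mem_normalizer {G : Type*} [Group G] {n : G} {H : Subgroup G}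
    (hn : n ∈ (Subgroup.normalizer (H : Set G))) : H.map (MulAut.conj n).toMonoidHom = H := by
  rw [Subgroup.mem_normalizer_iff] at hn
  ext x
  rw [mem_mapconj_iff]
  have h2 := hn (n⁻¹ * x * n)
  have h3 : n * (n⁻¹ * x * n) * n⁻¹ = x := by group
  rw [h3] at h2
  exact h2

private lemma mem_normalizer_of_mapconj_eq {G : Type*} [Group G] {n : G} {H : Subgroup G}
    (h : H.map (MulAut.conj n).toMonoidHom = H) : n ∈ (Subgroup.normalizer (H : Set G)) := by
  rw [Subgroup.mem_normalizer_iff]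
  intro x
  have h3 : n⁻¹ * (n * x * n⁻¹) * n = x := by group
  constructor
  · intro hx
    rw [← h, mem_mapconj_iff, h3]
    exact hx
  · intro hx
    rw [← h, mem_mapconj_iff, h3] at hx
    exact hx

private lemma index_mapconj {G : Type*} [Group G] (H : Subgroup G) (n : G) :
    (H.map (MulAut.conj n).toMonoidHom).index = H.index :=
  Subgroup.index_map_eq H (MulEquiv.surjective _)
    (by rw [(MonoidHom.ker_eq_bot_iff ((MulAut.conj n).toMonoidHom)).mpr (MulEquiv.injective _)]
        exact bot_le)

private lemma isPGroup_subgroupOf {p : ℕ} {G : Type*} [Group G] {A M : Subgroup G}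
    (hpA : IsPGroup p A) (hA : A ≤ M) : IsPGroup p (A.subgroupOf M) := by
  intro g
  obtain ⟨k, hk⟩ := hpA (Subgroup.subgroupOfEquivOfLe hA g)
  exact ⟨k, (Subgroup.subgroupOfEquivOfLe hA).injective (by rw [map_pow, hk, map_one])⟩

private lemma mapconj_one {G : Type*} [Group G] (H : Subgroup G) :
    H.map (MulAut.conj (1 : G)).toMonoidHom = H :=
  mapconj_eq_self_of_mem_normalizer (Subgroup.one_mem _)

private lemma conj_sylow_subgroup {p : ℕ} (hp : p.Prime) {G : Type*} [Group G] [Fintype G]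
    {M A B : Subgroup G} (hA : A ≤ M) (hB : B ≤ M)
    (hpA : IsPGroup p A) (hpB : IsPGroup p B)
    (hiA : ¬ p ∣ A.relIndex M) (hiB : ¬ p ∣ B.relIndex M) :
    ∃ m ∈ M, A.map (MulAut.conj m).toMonoidHom = B := by
  classical
  haveI : Fact p.Prime := ⟨hp⟩
  have key : ∀ (C : Subgroup G), C ≤ M → IsPGroup p C → ¬ p ∣ C.relIndex M →
      ∀ (Q : Sylow p ↥M), (C.subgroupOf M) ≤ Q.1 → C.subgroupOf M = Q.1 := by
    intro C hC hpC hiC Q hle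
    have h1 : (C.subgroupOf M).relIndex Q.1 * Q.1.index = (C.subgroupOf M).index :=
      Subgroup.relIndex_mul_index hle
    have h2 : (C.subgroupOf M).relIndex Q.1 ∣ Nat.card Q.1 :=
      Subgroup.index_dvd_card ((C.subgroupOf M).subgroupOf Q.1)
    obtain ⟨nq, hnq⟩ := IsPGroup.iff_card.mp Q.isPGroup'
    obtain ⟨j, hjq, hj⟩ := (Nat.dvd_prime_pow hp).mp (hnq ▸ h2)
    have hj0 : j = 0 := by
      by_contra hj0
      apply hiC
      have hpd : p ∣ (C.subgroupOf M).relIndex Q.1 := by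
        rw [hj]; exact dvd_pow_self p hj0
      have : (C.subgroupOf M).index = C.relIndex M := rfl
      rw [← this]
      exact (hpd.mul_right _).trans (dvd_of_eq h1)
    have : (C.subgroupOf M).relIndex Q.1 = 1 := by rw [hj, hj0, pow_zero]
    exact le_antisymm hle (Subgroup.relIndex_eq_one.mp this)
  obtain ⟨QA, hQA⟩ := (isPGroup_subgroupOf hpA hA).exists_le_sylow
  obtain ⟨QB, hQB⟩ := (isPGroup_subgroupOf hpB hB).exists_le_sylow
  have hQAe : A.subgroupOf M = QA.1 := key A hA hpA hiA QA hQA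
  have hQBe : B.subgroupOf M = QB.1 := key B hB hpB hiB QB hQB
  obtain ⟨m, hm⟩ := MulAction.exists_smul_eq ↥M QA QB
  refine ⟨(m : G), m.2, ?_⟩
  have hmem : ∀ xm : ↥M, xm ∈ QB.1 ↔ m⁻¹ * xm * m ∈ QA.1 := by
    intro xm
    rw [← hm]
    rw [Sylow.smul_def]
    constructor
    · intro hx
      have := Subgroup.mem_pointwise_smul_iff_inv_smul_mem.mp hx
      simpa using this
    · intro hx
      apply Subgroup.mem_pointwise_smul_iff_inv_smul_mem.mpr
      simpa using hx
  ext x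
  constructor
  · intro hx
    rw [mem_mapconj_iff] at hx
    -- (↑m)⁻¹ * x * ↑m ∈ A
    have hxM : x ∈ M := by
      have h4 : ((m : G)) * ((m : G)⁻¹ * x * (m : G)) * ((m : G))⁻¹ = x := by group
      rw [← h4]
      exact M.mul_mem (M.mul_mem m.2 (hA hx)) (M.inv_mem m.2)
    have hx2 : (⟨x, hxM⟩ : ↥M) ∈ QB.1 := by
      rw [hmem]
      rw [← hQAe, Subgroup.mem_subgroupOf]
      have : ((m⁻¹ * (⟨x, hxM⟩ : ↥M) * m : ↥M) : G) = (m : G)⁻¹ * x * (m : G) := rfl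
      rw [this]
      exact hx
    rw [← hQBe, Subgroup.mem_subgroupOf] at hx2
    exact hx2
  · intro hx
    rw [mem_mapconj_iff]
    have hx2 : (⟨x, hB hx⟩ : ↥M) ∈ QB.1 := by rw [← hQBe, Subgroup.mem_subgroupOf]; exact hx
    rw [hmem] at hx2
    rw [← hQAe, Subgroup.mem_subgroupOf] at hx2
    exact hx2

/-- If `G` is a finite permutation group on a set `Ω` of size `2n` with exactly two
orbits, each of length `n`, where `n = pq` with `p > q` primes and `q` does not
divide `p - 1`, then `G` contains a derangement. -/
theorem stmt_1 {G Ω : Type*} [Group G] [Fintype G] [Fintype Ω] [MulAction G Ω]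
    [FaithfulSMul G Ω] {n p q : ℕ} (hp : p.Prime) (hq : q.Prime) (hpq : q < p)
    (hdvd : ¬ q ∣ (p - 1)) (hn : n = p * q)
    (hcard : Fintype.card Ω = 2 * n)
    (horbits : Nat.card (MulAction.orbitRel.Quotient G Ω) = 2)
    (hlen : ∀ ω : Ω, (MulAction.orbit G ω).ncard = n) :
    ∃ g : G, ∀ ω : Ω, g • ω ≠ ω := by
  classical
  subst hn
  haveI hfp : Fact p.Prime := ⟨hp⟩
  haveI hfq : Fact q.Prime := ⟨hq⟩
  have hp2 : 2 ≤ p := hp.two_le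
  have hq2 : 2 ≤ q := hq.two_le
  have hΩne : Nonempty Ω := by
    rw [← Fintype.card_pos_iff, hcard]
    have : 0 < p * q := Nat.mul_pos (by omega) (by omega)
    omega
  have horb : ∀ δ : Ω, Nat.card (MulAction.orbit G δ) = p * q := fun δ => by
    rw [Nat.card_coe_set_eq]; exact hlen δ
  have hstabidx : ∀ δ : Ω, (MulAction.stabilizer G δ).index = p * q := fun δ => by
    rw [MulAction.index_stabilizer]; exact hlen δ
  obtain ⟨δ0⟩ := hΩne
  -- Sylow p-subgroup
  obtain ⟨P⟩ : Nonempty (Sylow p G) := inferInstance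
  set Pg : Subgroup G := P.1 with hPgdef
  have hPp : IsPGroup p Pg := P.isPGroup'
  have hPidx : ¬ p ∣ Pg.index := P.not_dvd_index
  -- stabilizers in the Sylow subgroup have index p
  have hstabPidx : ∀ δ : Ω, (MulAction.stabilizer ↥Pg δ).index = p := by
    intro δ
    have hdvdP : (MulAction.stabilizer ↥Pg δ).index ∣ Nat.card ↥Pg :=
      Subgroup.index_dvd_card _
    obtain ⟨k, hk⟩ := IsPGroup.iff_card.mp hPp
    obtain ⟨j, hjk, hj⟩ := (Nat.dvd_prime_pow hp).mp (hk ▸ hdvdP)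
    have hidxorb : (MulAction.stabilizer ↥Pg δ).index = (MulAction.orbit ↥Pg δ).ncard :=
      MulAction.index_stabilizer _ _
    have hsub : MulAction.orbit ↥Pg δ ⊆ MulAction.orbit G δ := by
      rintro x ⟨u, rfl⟩
      exact ⟨(u : G), rfl⟩
    have hle : (MulAction.orbit ↥Pg δ).ncard ≤ p * q := by
      rw [← hlen δ]
      exact Set.ncard_le_ncard hsub (Set.toFinite _)
    have hne1 : (MulAction.stabilizer ↥Pg δ).index ≠ 1 := by
      intro h1
      have htop : MulAction.stabilizer ↥Pg δ = ⊤ := Subgroup.index_eq_one.mp h1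
      have hPle : Pg ≤ MulAction.stabilizer G δ := by
        intro x hx
        have : (⟨x, hx⟩ : ↥Pg) ∈ MulAction.stabilizer ↥Pg δ := htop ▸ Subgroup.mem_top _
        exact this
      have hdd : (MulAction.stabilizer G δ).index ∣ Pg.index :=
        Subgroup.index_dvd_of_le hPle
      rw [hstabidx δ] at hdd
      exact hPidx ((Dvd.intro q rfl).trans hdd)
    -- p ^ j with j = 1
    have hj1 : j = 1 := by
      rcases Nat.lt_or_ge j 2 with hj2 | hj2
      · interval_cases j
        · exfalso; apply hne1; rw [hj, pow_zero]
        · rfl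
      · exfalso
        have : p * p ≤ p ^ j := by
          calc p * p = p ^ 2 := by ring
          _ ≤ p ^ j := Nat.pow_le_pow_right (by omega) hj2
        have hlt : p ^ j ≤ p * q := by rw [← hj, hidxorb]; exact hle
        nlinarith
    rw [hj, hj1, pow_one]
  have hstabPnormal : ∀ δ : Ω, (MulAction.stabilizer ↥Pg δ).Normal := fun δ =>
    normal_of_index_prime hp hPp (hstabPidx δ)
  have hstabconst : ∀ (u : ↥Pg) (δ : Ω),
      MulAction.stabilizer ↥Pg (u • δ) = MulAction.stabilizer ↥Pg δ := by
    intro u δ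
    rw [MulAction.stabilizer_smul_eq_stabilizer_map_conj]
    exact mapconj_eq_self_of_mem_normalizer
      (by rw [Subgroup.normalizer_eq_top_iff.mpr (hstabPnormal δ)]; exact Subgroup.mem_top _)
  -- the pointwise kernels
  set K : Ω → Subgroup G := fun δ => Pg ⊓ MulAction.stabilizer G δ with hKdef
  have hKmem : ∀ (δ : Ω) (x : G), x ∈ K δ ↔ x ∈ Pg ∧ x • δ = δ := by
    intro δ x
    rw [hKdef]
    simp [Subgroup.mem_inf, MulAction.mem_stabilizer_iff]
  have hKle : ∀ δ : Ω, K δ ≤ Pg := fun δ => inf_le_left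
  have hKstab : ∀ δ : Ω, K δ ≤ MulAction.stabilizer G δ := fun δ => inf_le_right
  have hsubsmul : ∀ (u : ↥Pg) (δ : Ω), u • δ = (u : G) • δ := fun u δ => rfl
  have hKP : ∀ (u : G), u ∈ Pg → ∀ δ : Ω, K (u • δ) = K δ := by
    intro u hu δ
    have hsc := hstabconst ⟨u, hu⟩ δ
    ext x
    rw [hKmem, hKmem]
    constructor
    · rintro ⟨hxP, hfix⟩
      refine ⟨hxP, ?_⟩
      have h1 : (⟨x, hxP⟩ : ↥Pg) ∈ MulAction.stabilizer ↥Pg ((⟨u, hu⟩ : ↥Pg) • δ) := by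
        rw [MulAction.mem_stabilizer_iff, hsubsmul]
        exact hfix
      rw [hsc] at h1
      exact h1
    · rintro ⟨hxP, hfix⟩
      refine ⟨hxP, ?_⟩
      have h1 : (⟨x, hxP⟩ : ↥Pg) ∈ MulAction.stabilizer ↥Pg δ := hfix
      rw [← hsc] at h1
      rw [MulAction.mem_stabilizer_iff, hsubsmul] at h1
      exact h1
  have hKsub : ∀ δ : Ω, (K δ).subgroupOf Pg = MulAction.stabilizer ↥Pg δ := by
    intro δ
    ext u
    rw [Subgroup.mem_subgroupOf, hKmem, MulAction.mem_stabilizer_iff, hsubsmul]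
    simp [u.2]
  have hKrel : ∀ δ : Ω, (K δ).relIndex Pg = p := by
    intro δ
    show ((K δ).subgroupOf Pg).index = p
    rw [hKsub δ]
    exact hstabPidx δ
  have hKconj : ∀ (nn : G), nn ∈ (Subgroup.normalizer (Pg : Set G)) → ∀ δ : Ω,
      K (nn • δ) = (K δ).map (MulAut.conj nn).toMonoidHom := by
    intro nn hnn δ
    rw [Subgroup.mem_normalizer_iff] at hnn
    ext x
    rw [mem_mapconj_iff, hKmem, hKmem]
    have hsm : ∀ z : G, (nn⁻¹ * z * nn) • δ = nn⁻¹ • z • nn • δ := by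
      intro z; rw [mul_smul, mul_smul]
    constructor
    · rintro ⟨hxP, hfix⟩
      have hmem : nn⁻¹ * x * nn ∈ Pg := by
        have h2 := (hnn (nn⁻¹ * x * nn)).mpr
        have h3 : nn * (nn⁻¹ * x * nn) * nn⁻¹ = x := by group
        rw [h3] at h2
        exact h2 hxP
      refine ⟨hmem, ?_⟩
      rw [hsm, hfix, inv_smul_smul]
    · rintro ⟨hxP, hfix⟩
      have hmem : x ∈ Pg := by
        have h2 := (hnn (nn⁻¹ * x * nn)).mp hxP
        have h3 : nn * (nn⁻¹ * x * nn) * nn⁻¹ = x := by group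
        rw [h3] at h2
        exact h2
      refine ⟨hmem, ?_⟩
      have h4 : nn⁻¹ • x • nn • δ = δ := by rw [← hsm, hfix]
      calc x • nn • δ = nn • nn⁻¹ • x • nn • δ := by rw [smul_inv_smul]
      _ = nn • δ := by rw [h4]
  have hKfix : ∀ (u : G), u ∈ Pg → ∀ δ : Ω,
      (K δ).map (MulAut.conj u).toMonoidHom = K δ := by
    intro u hu δ
    rw [← hKconj u (Subgroup.le_normalizer hu) δ, hKP u hu δ]
  have hKidx : ∀ δ : Ω, (K δ).index = p * Pg.index := by
    intro δ
    have h1 := Subgroup.relIndex_mul_index (hKle δ)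
    rw [hKrel δ] at h1
    exact h1.symm
  -- fusion: kernels of points in the same orbit are conjugate by an element of the normalizer
  set Ng : Subgroup G := (Subgroup.normalizer (Pg : Set G)) with hNgdef
  have hfusion : ∀ δ δ' : Ω, δ' ∈ MulAction.orbit G δ →
      ∃ nn ∈ Ng, (K δ).map (MulAut.conj nn).toMonoidHom = K δ' := by
    rintro δ δ' ⟨g, rfl⟩
    set A : Subgroup G := (K δ).map (MulAut.conj g).toMonoidHom with hAdef
    have hAle : A ≤ MulAction.stabilizer G (g • δ) := by
      rw [MulAction.stabilizer_smul_eq_stabilizer_map_conj]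
      exact Subgroup.map_mono (hKstab δ)
    have hBle : K (g • δ) ≤ MulAction.stabilizer G (g • δ) := hKstab _
    have hpKδ : IsPGroup p (K δ) := hPp.to_le (hKle δ)
    have hpA : IsPGroup p A := hpKδ.map _
    have hpB : IsPGroup p (K (g • δ)) := hPp.to_le (hKle _)
    have hrelgen : ∀ C : Subgroup G, C ≤ MulAction.stabilizer G (g • δ) →
        C.index = p * Pg.index → ¬ p ∣ C.relIndex (MulAction.stabilizer G (g • δ)) := by
      intro C hC hCidx hdp
      apply hPidx
      have h1 := Subgroup.relIndex_mul_index hC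
      rw [hstabidx (g • δ), hCidx] at h1
      obtain ⟨r', hr'⟩ := hdp
      have h2 : p * (C.relIndex (MulAction.stabilizer G (g • δ)) * q) = p * Pg.index := by
        calc p * (C.relIndex (MulAction.stabilizer G (g • δ)) * q)
            = C.relIndex (MulAction.stabilizer G (g • δ)) * (p * q) := by ring
        _ = p * Pg.index := h1
      have h3 : C.relIndex (MulAction.stabilizer G (g • δ)) * q = Pg.index :=
        Nat.eq_of_mul_eq_mul_left hp.pos h2
      refine ⟨r' * q, ?_⟩
      rw [← h3, hr']
      ring
    have hAidx : A.index = p * Pg.index := by rw [hAdef, index_mapconj, hKidx δ]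
    obtain ⟨m, hmSt, hmap⟩ := conj_sylow_subgroup hp hAle hBle hpA hpB
      (hrelgen A hAle hAidx) (hrelgen _ hBle (hKidx _))
    set n' : G := m * g with hn'def
    have hn'map : (K δ).map (MulAut.conj n').toMonoidHom = K (g • δ) := by
      rw [hn'def, ← mapconj_comp]
      rw [← hAdef]
      exact hmap
    have hPgM1 : Pg ≤ (Subgroup.normalizer (K (g • δ) : Set G)) := by
      intro u hu
      exact mem_normalizer_of_mapconj_eq (hKfix u hu (g • δ))
    have hP2M1 : Pg.map (MulAut.conj n').toMonoidHom ≤ (Subgroup.normalizer (K (g • δ) : Set G)) := by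
      rintro x hx
      rw [mem_mapconj_iff] at hx
      apply mem_normalizer_of_mapconj_eq
      set u : G := n'⁻¹ * x * n' with hudef
      have hxu : x = n' * u * n'⁻¹ := by rw [hudef]; group
      have harg : n' * u * n'⁻¹ * n' = n' * u := by group
      rw [hxu, ← hn'map, mapconj_comp, harg, ← mapconj_comp, hKfix u hx δ]
    have hrelPg : ¬ p ∣ Pg.relIndex (Subgroup.normalizer (K (g • δ) : Set G)) := by
      intro hdp
      apply hPidx
      have h1 := Subgroup.relIndex_mul_index hPgM1
      exact hdp.trans (Dvd.intro _ h1)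
    have hrelP2 : ¬ p ∣ (Pg.map (MulAut.conj n').toMonoidHom).relIndex (Subgroup.normalizer (K (g • δ) : Set G)) := by
      intro hdp
      apply hPidx
      have h1 := Subgroup.relIndex_mul_index hP2M1
      rw [index_mapconj] at h1
      exact hdp.trans (Dvd.intro _ h1)
    obtain ⟨m1, hm1, hmap1⟩ := conj_sylow_subgroup hp hP2M1 hPgM1 (hPp.map _) hPp hrelP2 hrelPg
    refine ⟨m1 * n', ?_, ?_⟩
    · rw [hNgdef]
      apply mem_normalizer_of_mapconj_eq
      rw [← mapconj_comp, hmap1]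
    · rw [← mapconj_comp, hn'map]
      exact mapconj_eq_self_of_mem_normalizer hm1
  -- the two orbits
  obtain ⟨c1, c2, hc12, hcall⟩ : ∃ c1 c2 : MulAction.orbitRel.Quotient G Ω,
      c1 ≠ c2 ∧ ∀ c, c = c1 ∨ c = c2 := by
    obtain ⟨x, y, hxy, hset⟩ := Nat.card_eq_two_iff.mp horbits
    refine ⟨x, y, hxy, fun c => ?_⟩
    have : c ∈ ({x, y} : Set _) := by rw [hset]; exact Set.mem_univ c
    simpa using this
  set δ₁ : Ω := Quotient.out c1 with hδ₁def
  set δ₂ : Ω := Quotient.out c2 with hδ₂def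
  have hc1orb : c1.orbit = MulAction.orbit G δ₁ := by
    conv_lhs => rw [← Quotient.out_eq' c1]
    exact MulAction.orbitRel.Quotient.orbit_mk δ₁
  have hc2orb : c2.orbit = MulAction.orbit G δ₂ := by
    conv_lhs => rw [← Quotient.out_eq' c2]
    exact MulAction.orbitRel.Quotient.orbit_mk δ₂
  have hcover : ∀ δ : Ω, δ ∈ MulAction.orbit G δ₁ ∨ δ ∈ MulAction.orbit G δ₂ := by
    intro δ
    rcases hcall (Quotient.mk'' δ) with h | h
    · left
      rw [← hc1orb]
      exact MulAction.orbitRel.Quotient.mem_orbit.mpr h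
    · right
      rw [← hc2orb]
      exact MulAction.orbitRel.Quotient.mem_orbit.mpr h
  -- counting within one orbit
  have hcount : ∀ δi : Ω, ∃ mfib : ℕ, p ∣ mfib ∧
      (∀ H ∈ (Set.toFinset (MulAction.orbit G δi)).image K,
        ((Set.toFinset (MulAction.orbit G δi)).filter (fun δ => K δ = H)).card = mfib) ∧
      ((Set.toFinset (MulAction.orbit G δi)).image K).card * mfib = p * q := by
    intro δi
    set Ofin := Set.toFinset (MulAction.orbit G δi) with hOfin
    set T := Ofin.image K with hT
    have hmemO : ∀ δ, δ ∈ Ofin ↔ δ ∈ MulAction.orbit G δi := by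
      intro δ; rw [hOfin, Set.mem_toFinset]
    have hOcard : Ofin.card = p * q := by
      rw [hOfin, Set.toFinset_card, ← Nat.card_eq_fintype_card]; exact horb δi
    have hconst : ∀ H ∈ T, ∀ H' ∈ T,
        (Ofin.filter (fun δ => K δ = H)).card = (Ofin.filter (fun δ => K δ = H')).card := by
      intro H hH H' hH'
      obtain ⟨δa, hδa, hKa⟩ := Finset.mem_image.mp hH
      obtain ⟨δb, hδb, hKb⟩ := Finset.mem_image.mp hH'
      rw [hmemO] at hδa hδb
      have horbab : δb ∈ MulAction.orbit G δa := by
        rw [MulAction.orbit_eq_iff.mpr hδa]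
        exact hδb
      obtain ⟨nn, hnn, hmapnn⟩ := hfusion δa δb horbab
      have hKbinv : (K δb).map (MulAut.conj nn⁻¹).toMonoidHom = K δa := by
        rw [← hmapnn, mapconj_comp, inv_mul_cancel, mapconj_one]
      apply Finset.card_bij (fun δ _ => nn • δ)
      · intro δ hδ
        rw [Finset.mem_filter] at hδ ⊢
        obtain ⟨hδO, hKδ⟩ := hδ
        rw [hmemO] at hδO
        refine ⟨?_, ?_⟩
        · rw [hmemO]
          obtain ⟨gg, rfl⟩ := hδO
          exact MulAction.mem_orbit_iff.mpr ⟨nn * gg, by rw [mul_smul]⟩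
        · rw [hKconj nn hnn δ, hKδ, ← hKa, hmapnn, hKb]
      · intro a ha b hb hab
        exact MulAction.injective nn hab
      · intro δ' hδ'
        rw [Finset.mem_filter] at hδ'
        obtain ⟨hδ'O, hKδ'⟩ := hδ'
        rw [hmemO] at hδ'O
        refine ⟨nn⁻¹ • δ', ?_, ?_⟩
        · rw [Finset.mem_filter]
          constructor
          · rw [hmemO]
            obtain ⟨gg, rfl⟩ := hδ'O
            exact MulAction.mem_orbit_iff.mpr ⟨nn⁻¹ * gg, by rw [mul_smul]⟩
          · rw [hKconj nn⁻¹ (Ng.inv_mem hnn) δ', hKδ', ← hKb, hKbinv, hKa]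
        · rw [smul_inv_smul]
    -- the canonical fiber
    have hδiO : δi ∈ Ofin := (hmemO δi).mpr (MulAction.mem_orbit_self δi)
    have hKδiT : K δi ∈ T := Finset.mem_image_of_mem K hδiO
    set mfib : ℕ := (Ofin.filter (fun δ => K δ = K δi)).card with hmfibdef
    have hfibs : ∀ H ∈ T, (Ofin.filter (fun δ => K δ = H)).card = mfib :=
      fun H hH => hconst H hH (K δi) hKδiT
    have hsum : ∑ H ∈ T, (Ofin.filter (fun δ => K δ = H)).card = Ofin.card :=
      (Finset.card_eq_sum_card_fiberwise (fun δ hδ => Finset.mem_image_of_mem K hδ)).symm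
    have hprod : T.card * mfib = p * q := by
      rw [← hOcard, ← hsum, Finset.sum_congr rfl hfibs, Finset.sum_const, smul_eq_mul]
    -- p divides the fiber cardinality
    have hpdvd : p ∣ mfib := by
      set s : Set Ω := {δ : Ω | δ ∈ MulAction.orbit G δi ∧ K δ = K δi} with hsdef
      have hsfin : s.toFinset = Ofin.filter (fun δ => K δ = K δi) := by
        ext δ
        rw [Set.mem_toFinset, Finset.mem_filter, hmemO]
        rfl
      have hcardeq : mfib = Nat.card s := by
        rw [Nat.card_coe_set_eq, Set.ncard_eq_toFinset_card', hsfin, hmfibdef]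
      rw [hcardeq]
      apply prime_dvd_card_invariant hp Pg hPp s
      · rintro u δ ⟨hδorb, hδK⟩
        constructor
        · obtain ⟨gg, rfl⟩ := hδorb
          exact MulAction.mem_orbit_iff.mpr ⟨(u : G) * gg, by rw [mul_smul]⟩
        · rw [hKP (u : G) u.2 δ, hδK]
      · rintro δ ⟨hδorb, hδK⟩
        by_contra hcon
        push_neg at hcon
        have htop : MulAction.stabilizer ↥Pg δ = ⊤ := by
          rw [Subgroup.eq_top_iff']
          intro u
          rw [MulAction.mem_stabilizer_iff, hsubsmul]
          exact hcon u
        have := hstabPidx δ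
        rw [htop, Subgroup.index_top] at this
        omega
    exact ⟨mfib, hpdvd, hfibs, hprod⟩
  set T1 : Finset (Subgroup G) := (Set.toFinset (MulAction.orbit G δ₁)).image K with hT1def
  set T2 : Finset (Subgroup G) := (Set.toFinset (MulAction.orbit G δ₂)).image K with hT2def
  obtain ⟨m1, hpm1, hfib1, hprod1⟩ := hcount δ₁
  obtain ⟨m2, hpm2, hfib2, hprod2⟩ := hcount δ₂
  have hk1 : T1.card = 1 ∨ T1.card = q := by
    obtain ⟨t1, ht1⟩ := hpm1
    have h2 : p * (T1.card * t1) = p * q := by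
      rw [← hprod1, ht1]; ring
    have h3 : T1.card * t1 = q := Nat.eq_of_mul_eq_mul_left hp.pos h2
    exact hq.eq_one_or_self_of_dvd T1.card ⟨t1, h3.symm⟩
  have hk2 : T2.card = 1 ∨ T2.card = q := by
    obtain ⟨t2, ht2⟩ := hpm2
    have h2 : p * (T2.card * t2) = p * q := by
      rw [← hprod2, ht2]; ring
    have h3 : T2.card * t2 = q := Nat.eq_of_mul_eq_mul_left hp.pos h2
    exact hq.eq_one_or_self_of_dvd T2.card ⟨t2, h3.symm⟩
  have hKmemT12 : ∀ δ : Ω, K δ ∈ T1 ∪ T2 := by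
    intro δ
    rcases hcover δ with h | h
    · exact Finset.mem_union_left _ (Finset.mem_image_of_mem K (Set.mem_toFinset.mpr h))
    · exact Finset.mem_union_right _ (Finset.mem_image_of_mem K (Set.mem_toFinset.mpr h))
  by_cases hcase : T1.card = q ∧ T2.card = q
  · -- main case: both families have exactly q kernels
    obtain ⟨hk1q, hk2q⟩ := hcase
    haveI : Fintype (ConjAct G) := Fintype.ofEquiv G ConjAct.toConjAct.toEquiv
    set N' : Subgroup (ConjAct G) :=
      Ng.map (ConjAct.toConjAct : G ≃* ConjAct G).toMonoidHom with hN'def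
    have hsmulconj : ∀ (g : G) (H : Subgroup G),
        (ConjAct.toConjAct g) • H = H.map (MulAut.conj g).toMonoidHom := by
      intro g H
      ext x
      rw [Subgroup.mem_pointwise_smul_iff_inv_smul_mem, mem_mapconj_iff]
      rw [ConjAct.smul_def]
      simp only [map_inv, ConjAct.ofConjAct_toConjAct, inv_inv]
    have horbitT : ∀ δi : Ω, MulAction.orbit ↥N' (K δi) =
        (((Set.toFinset (MulAction.orbit G δi)).image K : Finset (Subgroup G)) :
          Set (Subgroup G)) := by
      intro δi
      ext H
      constructor
      · rintro ⟨nh, rfl⟩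
        obtain ⟨nn, hnn, hν⟩ := Subgroup.mem_map.mp nh.2
        have hν' : ConjAct.toConjAct nn = (nh : ConjAct G) := hν
        have hsm : nh • K δi = K (nn • δi) := by
          show ((nh : ConjAct G)) • K δi = _
          rw [← hν', hsmulconj, ← hKconj nn hnn δi]
        show nh • K δi ∈ _
        rw [hsm]
        have hmem : nn • δi ∈ Set.toFinset (MulAction.orbit G δi) :=
          Set.mem_toFinset.mpr (MulAction.mem_orbit δi nn)
        exact Finset.mem_coe.mpr (Finset.mem_image_of_mem K hmem)
      · intro hH
        obtain ⟨δa, hδa, rfl⟩ := Finset.mem_image.mp (Finset.mem_coe.mp hH)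
        rw [Set.mem_toFinset] at hδa
        obtain ⟨nn, hnn, hmapnn⟩ := hfusion δi δa hδa
        refine ⟨⟨ConjAct.toConjAct nn, Subgroup.mem_map.mpr ⟨nn, hnn, rfl⟩⟩, ?_⟩
        show (ConjAct.toConjAct nn) • K δi = K δa
        rw [hsmulconj, hmapnn]
    have hstabidxN : ∀ δi : Ω,
        (((Set.toFinset (MulAction.orbit G δi)).image K).card = q) →
        ∀ H ∈ ((Set.toFinset (MulAction.orbit G δi)).image K : Finset (Subgroup G)),
        (MulAction.stabilizer ↥N' H).index = q := by
      intro δi hq' H hH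
      have hHorb : H ∈ MulAction.orbit ↥N' (K δi) := by
        rw [horbitT δi]
        exact Finset.mem_coe.mpr hH
      have horbH : MulAction.orbit ↥N' H =
          (((Set.toFinset (MulAction.orbit G δi)).image K : Finset (Subgroup G)) :
            Set (Subgroup G)) := by
        obtain ⟨nh, rfl⟩ := hHorb
        rw [MulAction.orbit_smul, horbitT δi]
      rw [MulAction.index_stabilizer, horbH, Set.ncard_coe_finset, hq']
    obtain ⟨R⟩ : Nonempty (Sylow q ↥N') := inferInstance
    have hRcard : ∃ cr : ℕ, Nat.card ↥(R : Subgroup ↥N') = q ^ cr :=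
      IsPGroup.iff_card.mp R.isPGroup'
    -- R acts transitively on each family of kernels, with all stabilizers equal
    have horbR : ∀ δi : Ω,
        (((Set.toFinset (MulAction.orbit G δi)).image K).card = q) →
        ∀ H ∈ ((Set.toFinset (MulAction.orbit G δi)).image K : Finset (Subgroup G)),
          MulAction.orbit ↥(R : Subgroup ↥N') H =
            (((Set.toFinset (MulAction.orbit G δi)).image K : Finset (Subgroup G)) :
              Set (Subgroup G)) := by
      intro δi hq' H hH
      have hHorb : H ∈ MulAction.orbit ↥N' (K δi) := by
        rw [horbitT δi]
        exact Finset.mem_coe.mpr hH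
      have horbH : MulAction.orbit ↥N' H =
          (((Set.toFinset (MulAction.orbit G δi)).image K : Finset (Subgroup G)) :
            Set (Subgroup G)) := by
        obtain ⟨nh, rfl⟩ := hHorb
        rw [MulAction.orbit_smul, horbitT δi]
      have hsubR : MulAction.orbit ↥(R : Subgroup ↥N') H ⊆
          (((Set.toFinset (MulAction.orbit G δi)).image K : Finset (Subgroup G)) :
            Set (Subgroup G)) := by
        rintro H' ⟨r, rfl⟩
        rw [← horbH]
        exact ⟨(r : ↥N'), rfl⟩
      have hncard : (MulAction.orbit ↥(R : Subgroup ↥N') H).ncard ≤ q := by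
        have h2 := Set.ncard_le_ncard hsubR (Set.toFinite _)
        rwa [Set.ncard_coe_finset, hq'] at h2
      have hidxorb : (MulAction.stabilizer ↥(R : Subgroup ↥N') H).index =
          (MulAction.orbit ↥(R : Subgroup ↥N') H).ncard := MulAction.index_stabilizer _ _
      have hne1 : (MulAction.stabilizer ↥(R : Subgroup ↥N') H).index ≠ 1 := by
        intro h1
        have htop : MulAction.stabilizer ↥(R : Subgroup ↥N') H = ⊤ :=
          Subgroup.index_eq_one.mp h1
        have hle : (R : Subgroup ↥N') ≤ MulAction.stabilizer ↥N' H := by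
          intro r hr
          have hmem : (⟨r, hr⟩ : ↥(R : Subgroup ↥N')) ∈
              MulAction.stabilizer ↥(R : Subgroup ↥N') H := htop ▸ Subgroup.mem_top _
          exact hmem
        have hdd : (MulAction.stabilizer ↥N' H).index ∣ (R : Subgroup ↥N').index :=
          Subgroup.index_dvd_of_le hle
        rw [hstabidxN δi hq' H hH] at hdd
        exact R.not_dvd_index hdd
      obtain ⟨cr, hcr⟩ := hRcard
      obtain ⟨j, hjcr, hj⟩ := (Nat.dvd_prime_pow hq).mp
        (hcr ▸ Subgroup.index_dvd_card (MulAction.stabilizer ↥(R : Subgroup ↥N') H))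
      have hj1 : j = 1 := by
        rcases Nat.lt_or_ge j 2 with hj2 | hj2
        · interval_cases j
          · exfalso; exact hne1 (by rw [hj, pow_zero])
          · rfl
        · exfalso
          have hgeq : q * q ≤ q ^ j := by
            calc q * q = q ^ 2 := by ring
            _ ≤ q ^ j := Nat.pow_le_pow_right (by omega) hj2
          have hleq : q ^ j ≤ q := by rw [← hj, hidxorb]; exact hncard
          nlinarith
      have horbcard : (MulAction.orbit ↥(R : Subgroup ↥N') H).ncard = q := by
        rw [← hidxorb, hj, hj1, pow_one]
      exact Set.eq_of_subset_of_ncard_le hsubR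
        (by rw [Set.ncard_coe_finset, hq', horbcard]) (Set.toFinite _)
    have hRmain : ∀ δi : Ω,
        (((Set.toFinset (MulAction.orbit G δi)).image K).card = q) →
        ∀ H ∈ ((Set.toFinset (MulAction.orbit G δi)).image K : Finset (Subgroup G)),
          MulAction.stabilizer ↥(R : Subgroup ↥N') H =
            MulAction.stabilizer ↥(R : Subgroup ↥N') (K δi) := by
      intro δi hq' H hH
      have hKδiT : K δi ∈ (Set.toFinset (MulAction.orbit G δi)).image K :=
        Finset.mem_image_of_mem K (Set.mem_toFinset.mpr (MulAction.mem_orbit_self δi))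
      have hstabKidx : (MulAction.stabilizer ↥(R : Subgroup ↥N') (K δi)).index = q := by
        rw [MulAction.index_stabilizer, horbR δi hq' (K δi) hKδiT, Set.ncard_coe_finset, hq']
      have hnormal : (MulAction.stabilizer ↥(R : Subgroup ↥N') (K δi)).Normal :=
        normal_of_index_prime hq R.isPGroup' hstabKidx
      have hHorbR : H ∈ MulAction.orbit ↥(R : Subgroup ↥N') (K δi) := by
        rw [horbR δi hq' (K δi) hKδiT]
        exact Finset.mem_coe.mpr hH
      obtain ⟨r, rfl⟩ := hHorbR
      rw [MulAction.stabilizer_smul_eq_stabilizer_map_conj]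
      exact mapconj_eq_self_of_mem_normalizer
        (by rw [Subgroup.normalizer_eq_top_iff.mpr hnormal]; exact Subgroup.mem_top _)
    -- choose the derangement
    have hKδ1T : K δ₁ ∈ T1 :=
      Finset.mem_image_of_mem K (Set.mem_toFinset.mpr (MulAction.mem_orbit_self δ₁))
    have hKδ2T : K δ₂ ∈ T2 :=
      Finset.mem_image_of_mem K (Set.mem_toFinset.mpr (MulAction.mem_orbit_self δ₂))
    have hB1top : MulAction.stabilizer ↥(R : Subgroup ↥N') (K δ₁) ≠ ⊤ := by
      intro htop
      have h1 : (MulAction.stabilizer ↥(R : Subgroup ↥N') (K δ₁)).index = q := by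
        rw [MulAction.index_stabilizer, horbR δ₁ hk1q (K δ₁) hKδ1T, Set.ncard_coe_finset, hk1q]
      rw [htop, Subgroup.index_top] at h1
      omega
    have hB2top : MulAction.stabilizer ↥(R : Subgroup ↥N') (K δ₂) ≠ ⊤ := by
      intro htop
      have h1 : (MulAction.stabilizer ↥(R : Subgroup ↥N') (K δ₂)).index = q := by
        rw [MulAction.index_stabilizer, horbR δ₂ hk2q (K δ₂) hKδ2T, Set.ncard_coe_finset, hk2q]
      rw [htop, Subgroup.index_top] at h1
      omega
    obtain ⟨y', hy'1, hy'2⟩ := exists_notMem_pair hB1top hB2top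
    obtain ⟨y, hyNg, hνy⟩ := Subgroup.mem_map.mp (y' : ↥N').2
    have hνy' : ConjAct.toConjAct y = ((y' : ↥N') : ConjAct G) := hνy
    refine ⟨y, fun δ hfix => ?_⟩
    have hy'smul : y' • K δ = K δ := by
      show ((y' : ↥N') : ConjAct G) • K δ = K δ
      rw [← hνy', hsmulconj, ← hKconj y hyNg δ, hfix]
    rcases hcover δ with hδ | hδ
    · apply hy'1
      have hKT : K δ ∈ T1 := Finset.mem_image_of_mem K (Set.mem_toFinset.mpr hδ)
      rw [← hRmain δ₁ hk1q (K δ) hKT]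
      exact hy'smul
    · apply hy'2
      have hKT : K δ ∈ T2 := Finset.mem_image_of_mem K (Set.mem_toFinset.mpr hδ)
      rw [← hRmain δ₂ hk2q (K δ) hKT]
      exact hy'smul
  · -- covering case
    have hcard12 : (T1 ∪ T2).card ≤ q + 1 := by
      have hun := Finset.card_union_le T1 T2
      rcases hk1 with h1 | h1 <;> rcases hk2 with h2 | h2
      · omega
      · omega
      · omega
      · exact absurd ⟨h1, h2⟩ hcase
    set S' : Finset (Subgroup ↥Pg) := (T1 ∪ T2).image (fun H => H.subgroupOf Pg) with hS'def
    have hS'card : S'.card ≤ p := le_trans Finset.card_image_le (by omega)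
    have hS'idx : ∀ H' ∈ S', H'.index = p := by
      intro H' hH'
      obtain ⟨H, hH, rfl⟩ := Finset.mem_image.mp hH'
      rcases Finset.mem_union.mp hH with hH1 | hH1
      · obtain ⟨δa, _, rfl⟩ := Finset.mem_image.mp hH1
        exact hKrel δa
      · obtain ⟨δa, _, rfl⟩ := Finset.mem_image.mp hH1
        exact hKrel δa
    obtain ⟨x, hx⟩ := exists_notMem_of_cover hp2 S' hS'idx hS'card
    refine ⟨(x : G), fun δ hfix => ?_⟩
    have hxK : x ∈ (K δ).subgroupOf Pg := by
      rw [Subgroup.mem_subgroupOf, hKmem]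
      exact ⟨x.2, hfix⟩
    exact hx _ (Finset.mem_image_of_mem _ (hKmemT12 δ)) hxK
end

section
/- Let G be a finite permutation group on a set Ω of size 2n with exactly two orbits, each of length n, let p be a prime, let P be a Sylow p-subgroup of G, and suppose n = b·p^k with b < p. Then P has exactly 2b orbits on Ω, each of length p^k. -/
open MulAction

/-- Let `G` be a finite permutation group on a set `Ω` of size `2n` with exactly two
orbits, each of length `n`, let `p` be a prime, let `P` be a Sylow `p`-subgroup of `G`,
and suppose `n = b·p^k` with `b < p`. Then `P` has exactly `2b` orbits on `Ω`, each of
length `p^k`. -/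
theorem stmt_3 {G Ω : Type*} [Group G] [Fintype G] [Fintype Ω] [MulAction G Ω]
    [FaithfulSMul G Ω] {n b p k : ℕ} (hp : p.Prime) (P : Sylow p G)
    (hn : n = b * p ^ k) (hb : b < p)
    (hcard : Fintype.card Ω = 2 * n)
    (horbits : Nat.card (MulAction.orbitRel.Quotient G Ω) = 2)
    (hlen : ∀ ω : Ω, (MulAction.orbit G ω).ncard = n) :
    Nat.card (MulAction.orbitRel.Quotient (↥(P : Subgroup G)) Ω) = 2 * b ∧
    ∀ ω : Ω, (MulAction.orbit (↥(P : Subgroup G)) ω).ncard = p ^ k := by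
  classical
  haveI : Fact p.Prime := ⟨hp⟩
  set H : Subgroup G := ↑P with hH
  -- Ω is nonempty
  have hne : Nonempty Ω := by
    by_contra h
    rw [not_nonempty_iff] at h
    rw [Nat.card_of_isEmpty] at horbits
    omega
  obtain ⟨ω0⟩ := hne
  have hn0 : 0 < n := by
    rw [← hlen ω0]
    exact (Set.ncard_pos (Set.toFinite _)).mpr ⟨ω0, mem_orbit_self ω0⟩
  have hb0 : 0 < b := by
    rcases Nat.eq_zero_or_pos b with h | h
    · subst h; simp at hn; omega
    · exact h
  have hpb : ¬ p ∣ b := fun h => absurd (Nat.le_of_dvd hb0 h) (not_le.mpr hb)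
  have hnfact : n.factorization p = k := by
    rw [hn, Nat.factorization_mul hb0.ne' (pow_ne_zero k hp.pos.ne')]
    simp [Nat.factorization_eq_zero_of_not_dvd hpb, hp.factorization_pow]
  set K := (Nat.card G).factorization p with hK
  have hPcard : Nat.card H = p ^ K := Sylow.card_eq_multiplicity P
  -- key claim: every P-orbit has size p^k
  have key : ∀ ω : Ω, Nat.card (orbit H ω) = p ^ k := by
    intro ω
    -- orbit-stabilizer for G
    have hOSG := MulAction.card_orbit_mul_card_stabilizer_eq_card_group G ω
    have hoG : Fintype.card (orbit G ω) = n := by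
      rw [← Nat.card_eq_fintype_card, Nat.card_coe_set_eq, hlen]
    set S := Nat.card (stabilizer G ω) with hS
    have hS0 : S ≠ 0 := Nat.card_pos.ne'
    have hGcard : Nat.card G = n * S := by
      rw [Nat.card_eq_fintype_card, ← hOSG, hoG, hS, Nat.card_eq_fintype_card]
    have hKeq : K = k + S.factorization p := by
      rw [hK, hGcard, Nat.factorization_mul hn0.ne' hS0]
      simp [hnfact]
    -- stabilizer in P injects into stabilizer in G
    have hf : ∃ f : stabilizer H ω →* stabilizer G ω, Function.Injective f := by
      refine ⟨{ toFun := fun x => ⟨((x : H) : G), x.2⟩, map_one' := rfl,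
                map_mul' := fun _ _ => rfl }, ?_⟩
      intro a c hac
      simp only [MonoidHom.coe_mk, OneHom.coe_mk] at hac
      replace hac := congrArg Subtype.val hac
      exact Subtype.ext (Subtype.ext hac)
    obtain ⟨f, hfinj⟩ := hf
    have hdvdS : Nat.card (stabilizer H ω) ∣ S := Subgroup.card_dvd_of_injective f hfinj
    -- orbit-stabilizer for P
    have hOSP := MulAction.card_orbit_mul_card_stabilizer_eq_card_group H ω
    have hOSP' : Nat.card (orbit H ω) * Nat.card (stabilizer H ω) = p ^ K := by
      rw [Nat.card_eq_fintype_card, Nat.card_eq_fintype_card, hOSP,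
        ← Nat.card_eq_fintype_card, hPcard]
    obtain ⟨m, hmK, hm⟩ := (Nat.dvd_prime_pow hp).mp ⟨_, hOSP'.symm⟩
    obtain ⟨s, hsK, hs⟩ := (Nat.dvd_prime_pow hp).mp
      (⟨_, by rw [← hOSP']; ring⟩ : Nat.card (stabilizer H ω) ∣ p ^ K)
    have hmsK : m + s = K := by
      have : p ^ (m + s) = p ^ K := by rw [pow_add, ← hm, ← hs, hOSP']
      exact Nat.pow_right_injective hp.two_le this
    have hsle : s ≤ S.factorization p := by
      rw [← Nat.Prime.pow_dvd_iff_le_factorization hp hS0, ← hs]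
      exact hdvdS
    -- upper bound on orbit size
    have hub : Nat.card (orbit H ω) ≤ n := by
      rw [Nat.card_coe_set_eq, ← hlen ω]
      exact Set.ncard_le_ncard (orbit_subgroup_subset H ω) (Set.toFinite _)
    have hub' : p ^ m < p ^ (k + 1) := by
      rw [← hm]
      calc Nat.card (orbit H ω) ≤ n := hub
        _ < p ^ (k + 1) := by
            rw [hn, pow_succ, mul_comm (p ^ k) p]
            exact Nat.mul_lt_mul_of_lt_of_le hb (le_refl _) (pow_pos hp.pos k)
    have hmk : m < k + 1 := (Nat.pow_lt_pow_iff_right hp.one_lt).mp hub'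
    have hmk' : m = k := by omega
    rw [hm, hmk']
  -- counting orbits
  constructor
  · have e := MulAction.selfEquivSigmaOrbits H Ω
    have h1 : Nat.card Ω = Nat.card (Σ q : orbitRel.Quotient H Ω, orbit H q.out) :=
      Nat.card_congr e
    rw [Nat.card_eq_fintype_card, Nat.card_eq_fintype_card, Fintype.card_sigma] at h1
    have h2 : ∀ q : orbitRel.Quotient H Ω, Fintype.card (orbit H q.out) = p ^ k := by
      intro q
      rw [← Nat.card_eq_fintype_card]
      exact key q.out
    rw [Finset.sum_congr rfl (fun q _ => h2 q), Finset.sum_const, smul_eq_mul] at h1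
    rw [hcard, hn] at h1
    rw [Nat.card_eq_fintype_card]
    have : Finset.univ.card = Fintype.card (orbitRel.Quotient H Ω) := rfl
    rw [this] at h1
    have hppos : 0 < p ^ k := pow_pos hp.pos k
    have := Nat.eq_of_mul_eq_mul_right hppos
      (show 2 * b * p ^ k = Fintype.card (orbitRel.Quotient H Ω) * p ^ k by
        rw [← h1]; ring)
    omega
  · intro ω
    rw [← Nat.card_coe_set_eq]
    exact key ω
end

section
/- Let G be a finite permutation group on a set Ω of size 2n with exactly two orbits, each of length n, let p be a prime, let P be a Sylow p-subgroup of G, and suppose n = b·p with b < p. Then P has exactly 2b orbits on Ω, each of length p; P is elementary abelian; and the number of distinct point stabilisers |{P_ω : ω ∈ Ω}| is at most 2b. -/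
open MulAction

section Aux

variable {G Ω : Type*} [Group G] [MulAction G Ω]

/-- Each orbit of the Sylow subgroup has size exactly `p`. -/
lemma aux_orbit_card [Fintype G] [Fintype Ω] {n b p : ℕ} (hp : p.Prime) (P : Sylow p G)
    (hn : n = b * p) (hb : b < p)
    (hlen : ∀ ω : Ω, (MulAction.orbit G ω).ncard = n) (ω : Ω) :
    Nat.card ↥(MulAction.orbit (↥(P : Subgroup G)) ω) = p := by
  haveI := Fact.mk hp
  set H := (P : Subgroup G) with hH
  have hOG : Nat.card ↥(orbit G ω) = n := by
    rw [Nat.card_coe_set_eq, hlen]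
  have hG : Nat.card G = n * Nat.card ↥(stabilizer G ω) := by
    rw [Subgroup.card_eq_card_quotient_mul_card_subgroup (stabilizer G ω), ← hOG,
      Nat.card_congr (orbitEquivQuotientStabilizer G ω)]
  have h2 : Nat.card ↥H = Nat.card ↥(orbit ↥H ω) * Nat.card ↥(stabilizer ↥H ω) := by
    rw [Subgroup.card_eq_card_quotient_mul_card_subgroup (stabilizer ↥H ω),
      Nat.card_congr (orbitEquivQuotientStabilizer ↥H ω)]
  have hGpos : 0 < Nat.card G := Nat.card_pos
  set v := (Nat.card G).factorization p with hv
  have hP : Nat.card ↥H = p ^ v := P.card_eq_multiplicity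
  obtain ⟨a, ha⟩ := (P.isPGroup').card_orbit ω
  -- stabilizer in H injects into stabilizer in G
  have hmap : (stabilizer ↥H ω).map H.subtype ≤ stabilizer G ω := by
    rintro x ⟨g, hg, rfl⟩
    simp only [SetLike.mem_coe, mem_stabilizer_iff] at hg
    rw [mem_stabilizer_iff]
    exact hg
  have hdvd : Nat.card ↥(stabilizer ↥H ω) ∣ Nat.card ↥(stabilizer G ω) := by
    rw [Nat.card_congr
      (Subgroup.equivMapOfInjective (stabilizer ↥H ω) H.subtype H.subtype_injective).toEquiv]
    exact Subgroup.card_dvd_of_le hmap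
  have hn0 : 0 < n := by
    rw [← hOG]
    haveI : Nonempty ↥(orbit G ω) := ⟨⟨ω, mem_orbit_self ω⟩⟩
    exact Nat.card_pos
  -- lower bound : a ≥ 1
  have ha1 : 1 ≤ a := by
    by_contra hcon
    push_neg at hcon
    interval_cases a
    rw [pow_zero] at ha
    have hsH : Nat.card ↥(stabilizer ↥H ω) = p ^ v := by
      rw [← hP, h2, ha, one_mul]
    have hdvd2 : p ^ (v + 1) ∣ Nat.card G := by
      rw [hG, hn, pow_succ']
      calc p * p ^ v ∣ p * Nat.card ↥(stabilizer G ω) :=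
            mul_dvd_mul_left p (hsH ▸ hdvd)
        _ ∣ b * p * Nat.card ↥(stabilizer G ω) := by
            rw [mul_comm b p, mul_assoc]
            exact mul_dvd_mul_left p (dvd_mul_left _ b)
    have := (Nat.Prime.pow_dvd_iff_le_factorization hp hGpos.ne').mp hdvd2
    rw [← hv] at this
    omega
  -- upper bound : a ≤ 1
  have hsub : orbit ↥H ω ⊆ orbit G ω := by
    rintro x ⟨g, rfl⟩
    exact mem_orbit ω (g : G)
  have hle : p ^ a ≤ n := by
    rw [← ha, ← hOG, Nat.card_coe_set_eq, Nat.card_coe_set_eq]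
    exact Set.ncard_le_ncard hsub (Set.toFinite _)
  have hlt : p ^ a < p ^ 2 := by
    refine lt_of_le_of_lt hle ?_
    rw [hn, pow_two]
    exact Nat.mul_lt_mul_of_lt_of_le hb le_rfl hp.pos
  have ha2 : a < 2 := (Nat.pow_lt_pow_iff_right hp.one_lt).mp hlt
  have : a = 1 := by omega
  rw [ha, this, pow_one]

/-- The image of the group in the permutations of an orbit of size `p` has order `p`. -/
lemma aux_range_card [Finite G] [Finite Ω] {p : ℕ} (hp : p.Prime) (hG : IsPGroup p G)
    (ω : Ω) (hO : Nat.card ↥(MulAction.orbit G ω) = p) :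
    Nat.card ↥(MulAction.toPermHom G ↥(MulAction.orbit G ω)).range = p := by
  haveI := Fact.mk hp
  set O := orbit G ω with hOdef
  set φ := toPermHom G ↥O with hφdef
  have hφ : ∀ (g : G) (z : ↥O), ((φ g z : ↥O) : Ω) = g • (z : Ω) := fun g z => rfl
  -- the range is a p-group
  have hpg : IsPGroup p ↥φ.range := by
    rw [MonoidHom.range_eq_map]
    exact (hG.to_subgroup ⊤).map φ
  obtain ⟨k, hk⟩ := hpg.exists_card_eq
  -- divides p!
  have hdvdperm : Nat.card ↥φ.range ∣ Nat.card (Equiv.Perm ↥O) :=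
    Subgroup.card_subgroup_dvd_card φ.range
  haveI : DecidableEq ↥O := Classical.decEq _
  haveI : Fintype ↥O := Fintype.ofFinite _
  have hperm : Nat.card (Equiv.Perm ↥O) = Nat.factorial p := by
    rw [Nat.card_eq_fintype_card, Fintype.card_perm, ← Nat.card_eq_fintype_card, hO]
  have hppos := hp.pos
  have hfac : Nat.factorial p = p * Nat.factorial (p - 1) := by
    obtain ⟨m, rfl⟩ : ∃ m, p = m + 1 := ⟨p - 1, by omega⟩
    simp [Nat.factorial_succ]
  have hk1 : k ≤ 1 := by
    by_contra hcon
    push_neg at hcon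
    have h2 : p ^ 2 ∣ Nat.factorial p := by
      rw [← hperm]
      exact dvd_trans (pow_dvd_pow p hcon) (hk ▸ hdvdperm)
    rw [hfac, pow_two] at h2
    have := (Nat.mul_dvd_mul_iff_left hp.pos).mp h2
    have := (Nat.Prime.dvd_factorial hp).mp this
    omega
  -- lower bound : p ≤ card range
  have hker : φ.ker ≤ stabilizer G ω := by
    intro g hg
    rw [MonoidHom.mem_ker] at hg
    have := congrArg (fun e : Equiv.Perm ↥O => ((e ⟨ω, mem_orbit_self ω⟩ : ↥O) : Ω)) hg
    rw [mem_stabilizer_iff]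
    simpa only [hφ, Equiv.Perm.coe_one, id_eq] using this
  have hcard1 : Nat.card G = Nat.card ↥φ.range * Nat.card ↥φ.ker := by
    rw [Subgroup.card_eq_card_quotient_mul_card_subgroup φ.ker,
      Nat.card_congr (QuotientGroup.quotientKerEquivRange φ).toEquiv]
  have hcard2 : Nat.card G = p * Nat.card ↥(stabilizer G ω) := by
    rw [Subgroup.card_eq_card_quotient_mul_card_subgroup (stabilizer G ω), ← hO,
      Nat.card_congr (orbitEquivQuotientStabilizer G ω)]
  have hSpos : 0 < Nat.card ↥(stabilizer G ω) := Nat.card_pos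
  have hkerle : Nat.card ↥φ.ker ≤ Nat.card ↥(stabilizer G ω) :=
    Subgroup.card_le_of_le hker
  have hge : p ≤ Nat.card ↥φ.range := by
    have h3 : p * Nat.card ↥(stabilizer G ω) ≤
        Nat.card ↥φ.range * Nat.card ↥(stabilizer G ω) := by
      rw [← hcard2, hcard1]
      exact Nat.mul_le_mul_left _ hkerle
    exact Nat.le_of_mul_le_mul_right h3 hSpos
  have hk0 : 1 ≤ k := by
    by_contra hcon
    push_neg at hcon
    interval_cases k
    rw [pow_zero] at hk
    rw [hk] at hge
    have := hp.two_le
    omega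
  have : k = 1 := by omega
  rw [hk, this, pow_one]

/-- Pointwise consequences of the fact that the image in `Perm(orbit)` has order `p`. -/
lemma aux_pointwise [Finite G] [Finite Ω] {p : ℕ} (hp : p.Prime) (ω : Ω)
    (hQ : Nat.card ↥(MulAction.toPermHom G ↥(MulAction.orbit G ω)).range = p) :
    (∀ x y : G, (x * y) • ω = (y * x) • ω) ∧ (∀ x : G, (x ^ p) • ω = ω) ∧
      (∀ g : G, ∀ δ : Ω, g • ω = ω → δ ∈ MulAction.orbit G ω → g • δ = δ) := by
  haveI := Fact.mk hp
  set O := orbit G ω with hOdef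
  set φ := toPermHom G ↥O with hφdef
  have hφ : ∀ (g : G) (z : ↥O), ((φ g z : ↥O) : Ω) = g • (z : Ω) := fun g z => rfl
  have hc : IsCyclic ↥φ.range := isCyclic_of_prime_card hQ
  letI : CommGroup ↥φ.range := IsCyclic.commGroup
  have hcomm : ∀ x y : G, φ x * φ y = φ y * φ x := by
    intro x y
    have h := mul_comm (⟨φ x, ⟨x, rfl⟩⟩ : ↥φ.range) (⟨φ y, ⟨y, rfl⟩⟩ : ↥φ.range)
    exact congrArg Subtype.val h
  have hmulpt : ∀ x y : G, (x * y) • ω = (y * x) • ω := by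
    intro x y
    have h1 : φ (x * y) = φ (y * x) := by
      rw [map_mul, map_mul, hcomm]
    have := congrArg (fun e : Equiv.Perm ↥O => ((e ⟨ω, mem_orbit_self ω⟩ : ↥O) : Ω)) h1
    simpa only [hφ] using this
  refine ⟨hmulpt, ?_, ?_⟩
  · intro x
    have hq : (⟨φ x, ⟨x, rfl⟩⟩ : ↥φ.range) ^ p = 1 := by
      rw [← hQ]; exact pow_card_eq_one'
    have h1 : (φ x) ^ p = 1 := by
      have := congrArg Subtype.val hq
      simpa using this
    have h3 : φ (x ^ p) = 1 := by rw [map_pow, h1]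
    have := congrArg (fun e : Equiv.Perm ↥O => ((e ⟨ω, mem_orbit_self ω⟩ : ↥O) : Ω)) h3
    simpa only [hφ, Equiv.Perm.coe_one, id_eq] using this
  · rintro g δ hg ⟨h, rfl⟩
    calc g • h • ω = (g * h) • ω := smul_smul g h ω
      _ = (h * g) • ω := hmulpt g h
      _ = h • g • ω := (smul_smul h g ω).symm
      _ = h • ω := by rw [hg]

end Aux

/-- Let `G` be a finite permutation group on a set `Ω` of size `2n` with exactly two
orbits, each of length `n`, let `p` be a prime, let `P` be a Sylow `p`-subgroup of `G`,
and suppose `n = b·p` with `b < p`. Then `P` has exactly `2b` orbits on `Ω`, each of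
length `p`; `P` is elementary abelian; and the number of distinct point stabilisers
`|{P_ω : ω ∈ Ω}|` is at most `2b`. -/
theorem stmt_4 {G Ω : Type*} [Group G] [Fintype G] [Fintype Ω] [MulAction G Ω]
    [FaithfulSMul G Ω] {n b p : ℕ} (hp : p.Prime) (P : Sylow p G)
    (hn : n = b * p) (hb : b < p)
    (hcard : Fintype.card Ω = 2 * n)
    (horbits : Nat.card (MulAction.orbitRel.Quotient G Ω) = 2)
    (hlen : ∀ ω : Ω, (MulAction.orbit G ω).ncard = n) :
    (Nat.card (MulAction.orbitRel.Quotient (↥(P : Subgroup G)) Ω) = 2 * b ∧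
      ∀ ω : Ω, (MulAction.orbit (↥(P : Subgroup G)) ω).ncard = p) ∧
    ((∀ x y : ↥(P : Subgroup G), x * y = y * x) ∧
      ∀ x : ↥(P : Subgroup G), x ≠ 1 → orderOf x = p) ∧
    (Set.range fun ω : Ω => MulAction.stabilizer (↥(P : Subgroup G)) ω).ncard ≤ 2 * b := by
  haveI := Fact.mk hp
  set H := (P : Subgroup G) with hH
  -- each P-orbit has size p
  have hcardO : ∀ ω : Ω, Nat.card ↥(orbit ↥H ω) = p := aux_orbit_card hp P hn hb hlen
  have hQ : ∀ ω : Ω, Nat.card ↥(MulAction.toPermHom ↥H ↥(MulAction.orbit ↥H ω)).range = p :=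
    fun ω => aux_range_card hp P.isPGroup' ω (hcardO ω)
  have hpt := fun ω : Ω => aux_pointwise hp ω (hQ ω)
  -- faithfulness of the subgroup action
  have hfaith : ∀ x y : ↥H, (∀ ω : Ω, x • ω = y • ω) → x = y := by
    intro x y h
    refine Subtype.ext (FaithfulSMul.eq_of_smul_eq_smul fun ω : Ω => ?_)
    exact h ω
  -- orbit count
  have horbP : Nat.card (orbitRel.Quotient ↥H Ω) = 2 * b := by
    haveI : Fintype (orbitRel.Quotient ↥H Ω) := Fintype.ofFinite _
    haveI : ∀ q : orbitRel.Quotient ↥H Ω, Fintype ↥q.orbit :=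
      fun q => Set.Finite.fintype (Set.toFinite _)
    have key : ∀ q : orbitRel.Quotient ↥H Ω, Fintype.card ↥q.orbit = p := by
      intro q
      rw [← Nat.card_eq_fintype_card,
        orbitRel.Quotient.orbit_eq_orbit_out q Quotient.out_eq']
      exact hcardO _
    have hsum : Fintype.card Ω = Fintype.card (orbitRel.Quotient ↥H Ω) * p := by
      rw [Fintype.card_congr (selfEquivSigmaOrbits' ↥H Ω), Fintype.card_sigma]
      simp [key, Finset.sum_const, Finset.card_univ, mul_comm]
    rw [hcard, hn, ← mul_assoc] at hsum
    rw [Nat.card_eq_fintype_card]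
    exact (Nat.eq_of_mul_eq_mul_right hp.pos hsum).symm
  refine ⟨⟨horbP, ?_⟩, ⟨?_, ?_⟩, ?_⟩
  · intro ω
    rw [← Nat.card_coe_set_eq]
    exact hcardO ω
  · -- commutativity
    intro x y
    refine hfaith _ _ fun ω => ?_
    exact (hpt ω).1 x y
  · -- orders
    intro x hx
    have hxp : x ^ p = 1 := by
      refine hfaith _ _ fun ω => ?_
      rw [one_smul]
      exact (hpt ω).2.1 x
    have hd : orderOf x ∣ p := orderOf_dvd_of_pow_eq_one hxp
    rcases (Nat.Prime.eq_one_or_self_of_dvd hp _ hd) with h1 | h1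
    · exact absurd (orderOf_eq_one_iff.mp h1) hx
    · exact h1
  · -- stabilizer count
    have hstabeq : ∀ ω δ : Ω, δ ∈ orbit ↥H ω → stabilizer ↥H δ = stabilizer ↥H ω := by
      have hle : ∀ ω δ : Ω, δ ∈ orbit ↥H ω → stabilizer ↥H ω ≤ stabilizer ↥H δ := by
        intro ω δ hδ g hg
        rw [mem_stabilizer_iff] at hg ⊢
        exact (hpt ω).2.2 g δ hg hδ
      intro ω δ hδ
      have hsym : ω ∈ orbit ↥H δ := by
        obtain ⟨g, rfl⟩ := hδ
        exact ⟨g⁻¹, by simp⟩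
      exact le_antisymm (hle δ ω hsym) (hle ω δ hδ)
    have hrange : (Set.range fun ω : Ω => stabilizer ↥H ω) ⊆
        Set.range fun q : orbitRel.Quotient ↥H Ω => stabilizer ↥H (Quotient.out q) := by
      rintro s ⟨ω, rfl⟩
      refine ⟨Quotient.mk'' ω, ?_⟩
      refine hstabeq ω _ ?_
      have h1 : Quotient.out (Quotient.mk'' ω : orbitRel.Quotient ↥H Ω) ∈ orbit ↥H ω := by
        have := Quotient.exact' (Quotient.out_eq' (Quotient.mk'' ω : orbitRel.Quotient ↥H Ω))
        rwa [orbitRel_apply] at this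
      exact h1
    calc (Set.range fun ω : Ω => stabilizer ↥H ω).ncard
        ≤ (Set.range fun q : orbitRel.Quotient ↥H Ω => stabilizer ↥H (Quotient.out q)).ncard :=
          Set.ncard_le_ncard hrange (Set.toFinite _)
      _ ≤ Nat.card (orbitRel.Quotient ↥H Ω) := by
          rw [← Set.image_univ, ← Set.ncard_univ (orbitRel.Quotient ↥H Ω)]
          exact Set.ncard_image_le Set.finite_univ
      _ = 2 * b := horbP
end

section
/- Let G be a finite permutation group on a set Ω of size 2n with exactly two orbits, each of length n, let p be a prime, let P be a Sylow p-subgroup of G, and suppose n = b·p with b < (p+1)/2. Then P contains a derangement, i.e., an element of P fixing no point of Ω. -/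
/-!
The elements of a Sylow `p`-subgroup `P` fix no common point, since `p` divides every orbit
length of `G`. Suppose every element of `P` had a fixed point. Each `g ∈ P` then fixes at least
`p` points (fixed points of `⟨g⟩` are counted mod `p` and `p ∣ |Ω|`), and every `P`-orbit has
length at least `p`. Burnside's lemma turns this into
`|Ω| + (|P| - 1) p ≤ #(P-orbits) · |P| ≤ (|Ω| / p) · |P|`, which fails once `|Ω| ≤ p²`;
here `|Ω| = 2bp ≤ p²`.
-/

open MulAction

theorem MulAction.fixedPoints_zpowers_eq_fixedBy {G Ω : Type*} [Group G] [MulAction G Ω]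
    (g : G) : fixedPoints (Subgroup.zpowers g) Ω = fixedBy Ω g := by
  ext ω
  simp only [mem_fixedPoints, Subtype.forall, Subgroup.mem_zpowers_iff, forall_exists_index,
    forall_apply_eq_imp_iff, Subgroup.mk_smul]
  exact mem_fixedBy_zpowers_iff_mem_fixedBy

namespace IsPGroup

variable {p : ℕ} [Fact p.Prime] {P Ω : Type*} [Group P] [MulAction P Ω] (hP : IsPGroup p P)
include hP

theorem prime_dvd_card_orbit [Finite Ω] {ω : Ω} (hω : ω ∉ fixedPoints P Ω) :
    p ∣ Nat.card (orbit P ω) := by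
  obtain ⟨k, hk⟩ := hP.card_orbit ω
  rcases k with _ | k
  · refine absurd ?_ hω
    rw [← subsingleton_orbit_iff_mem_fixedPoints, ← Set.subsingleton_coe]
    exact Finite.card_le_one_iff_subsingleton.mp (by rw [hk, pow_zero])
  · rw [hk]
    exact dvd_pow_self p k.succ_ne_zero

theorem prime_dvd_card_of_fixedPoints_eq_empty [Finite Ω] (hfree : fixedPoints P Ω = ∅) :
    p ∣ Nat.card Ω := by
  have hmod := hP.card_modEq_card_fixedPoints Ω
  rw [hfree, Nat.card_coe_set_eq, Set.ncard_empty] at hmod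
  exact Nat.modEq_zero_iff_dvd.mp hmod

theorem card_orbitRel_quotient_mul_le [Finite Ω] (hfree : fixedPoints P Ω = ∅) :
    Nat.card (orbitRel.Quotient P Ω) * p ≤ Nat.card Ω := by
  have := Fintype.ofFinite Ω
  classical
  rw [Nat.card_congr (selfEquivSigmaOrbits P Ω), Nat.card_sigma, Nat.card_eq_fintype_card,
    ← Finset.card_univ, ← smul_eq_mul, ← Finset.sum_const]
  exact Finset.sum_le_sum fun q _ ↦
    Nat.le_of_dvd (Finite.card_pos_iff.mpr (nonempty_orbit _).to_subtype)
      (hP.prime_dvd_card_orbit (hfree ▸ Set.notMem_empty _))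

theorem prime_le_card_fixedBy [Finite Ω] (hΩ : p ∣ Nat.card Ω) {g : P}
    (hg : (fixedBy Ω g).Nonempty) : p ≤ Nat.card (fixedBy Ω g) := by
  have hmod := (hP.to_subgroup (Subgroup.zpowers g)).card_modEq_card_fixedPoints Ω
  rw [fixedPoints_zpowers_eq_fixedBy] at hmod
  have := hg.to_subtype
  exact Nat.le_of_dvd Nat.card_pos
    (Nat.modEq_zero_iff_dvd.mp (hmod.symm.trans (Nat.modEq_zero_iff_dvd.mpr hΩ)))

theorem card_add_mul_le_sum_card_fixedBy [Fintype P] [Finite Ω] (hΩ : p ∣ Nat.card Ω)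
    (hfix : ∀ g : P, (fixedBy Ω g).Nonempty) :
    Nat.card Ω + (Nat.card P - 1) * p ≤ ∑ g : P, Nat.card (fixedBy Ω g) := by
  classical
  rw [← Finset.add_sum_erase _ _ (Finset.mem_univ 1), fixedBy_one_eq_univ, Nat.card_univ]
  gcongr
  calc (Nat.card P - 1) * p = (Finset.univ.erase (1 : P)).card • p := by
        rw [Finset.card_erase_of_mem (Finset.mem_univ _), Finset.card_univ,
          Nat.card_eq_fintype_card, smul_eq_mul]
    _ ≤ _ := Finset.card_nsmul_le_sum _ _ _ fun g _ ↦ hP.prime_le_card_fixedBy hΩ (hfix g)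

theorem exists_forall_smul_ne [Finite P] [Finite Ω] (hfree : fixedPoints P Ω = ∅)
    (hcard : Nat.card Ω ≤ p ^ 2) : ∃ g : P, ∀ ω : Ω, g • ω ≠ ω := by
  by_contra! hfix
  classical
  have := Fintype.ofFinite P
  have := Fintype.ofFinite Ω
  obtain ⟨m, hm⟩ := hP.prime_dvd_card_of_fixedPoints_eq_empty hfree
  have hburnside : ∑ g : P, Nat.card (fixedBy Ω g) =
      Nat.card (orbitRel.Quotient P Ω) * Nat.card P := by
    simpa only [Nat.card_eq_fintype_card] using sum_card_fixedBy_eq_card_orbits_mul_card_group P Ω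
  have hlower := hP.card_add_mul_le_sum_card_fixedBy ⟨m, hm⟩ hfix
  have horbits := hP.card_orbitRel_quotient_mul_le hfree
  have : Nonempty Ω := ⟨(hfix 1).choose⟩
  have hm0 : 0 < m := Nat.pos_of_mul_pos_left (hm ▸ Nat.card_pos)
  obtain ⟨q, hq⟩ := Nat.exists_eq_add_one.mpr (Nat.card_pos (α := P))
  have hp := (Fact.out : p.Prime).pos
  have hmp : m ≤ p := Nat.le_of_mul_le_mul_left (by rw [← sq, ← hm]; exact hcard) hp
  have hr : Nat.card (orbitRel.Quotient P Ω) ≤ m :=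
    Nat.le_of_mul_le_mul_left (by rw [mul_comm, ← hm]; exact horbits) hp
  have : p * m + q * m ≤ m + q * m := calc
    p * m + q * m ≤ Nat.card Ω + (Nat.card P - 1) * p := by
      rw [hm, hq, Nat.add_sub_cancel]; gcongr
    _ ≤ Nat.card (orbitRel.Quotient P Ω) * Nat.card P := hburnside ▸ hlower
    _ ≤ m * (q + 1) := by rw [hq]; gcongr
    _ = m + q * m := by ring
  have := (Fact.out : p.Prime).two_le
  nlinarith

end IsPGroup

theorem Sylow.notMem_fixedPoints_of_prime_dvd_ncard_orbit {p : ℕ} [Fact p.Prime] {G Ω : Type*}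
    [Group G] [MulAction G Ω] (P : Sylow p G) [P.FiniteIndex] {ω : Ω} (h : p ∣ (orbit G ω).ncard) :
    ω ∉ fixedPoints (P : Subgroup G) Ω := fun hω ↦ by
  have hle : (P : Subgroup G) ≤ stabilizer G ω := fun g hg ↦ hω ⟨g, hg⟩
  exact P.not_dvd_index ((index_stabilizer G ω ▸ h).trans (Subgroup.index_dvd_of_le hle))

theorem stmt_6_general {G Ω : Type*} [Group G] [Fintype G] [Fintype Ω] [MulAction G Ω]
    {n b p : ℕ} (hp : p.Prime) (P : Sylow p G)
    (hn : n = b * p) (hb : 2 * b < p + 1)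
    (hcard : Fintype.card Ω = 2 * n)
    (hlen : ∀ ω : Ω, (MulAction.orbit G ω).ncard = n) :
    ∃ g : ↥(P : Subgroup G), ∀ ω : Ω, g • ω ≠ ω := by
  have : Fact p.Prime := ⟨hp⟩
  have hfree : fixedPoints (P : Subgroup G) Ω = ∅ :=
    Set.eq_empty_of_forall_notMem fun ω ↦ P.notMem_fixedPoints_of_prime_dvd_ncard_orbit
      (by rw [hlen ω, hn]; exact dvd_mul_left p b)
  refine P.isPGroup'.exists_forall_smul_ne hfree ?_
  rw [Nat.card_eq_fintype_card, hcard, hn, sq]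
  nlinarith

/-- Let `G` be a finite permutation group on a set `Ω` of size `2n` with exactly two
orbits, each of length `n`, let `p` be a prime, let `P` be a Sylow `p`-subgroup of `G`,
and suppose `n = b·p` with `b < (p+1)/2` (equivalently `2b < p + 1`). Then `P` contains
a derangement, i.e. an element of `P` fixing no point of `Ω`. -/
theorem stmt_6 {G Ω : Type*} [Group G] [Fintype G] [Fintype Ω] [MulAction G Ω]
    [FaithfulSMul G Ω] {n b p : ℕ} (hp : p.Prime) (P : Sylow p G)
    (hn : n = b * p) (hb : 2 * b < p + 1)
    (hcard : Fintype.card Ω = 2 * n)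
    (horbits : Nat.card (MulAction.orbitRel.Quotient G Ω) = 2)
    (hlen : ∀ ω : Ω, (MulAction.orbit G ω).ncard = n) :
    ∃ g : ↥(P : Subgroup G), ∀ ω : Ω, g • ω ≠ ω :=
  stmt_6_general hp P hn hb hcard hlen
end

section
/- Let q be a prime power, let V = (𝔽_q)^d, and let 𝒲 be a set of subspaces of V of codimension 1 such that the union of the subspaces in 𝒲 is all of V and the intersection of the subspaces in 𝒲 is {0}. Then 2 ≤ d ≤ |𝒲| − q + 1. -/
open Module

section helpers

variable {F : Type*} [Field F] {V : Type*} [AddCommGroup V] [Module F V]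
  [FiniteDimensional F V]

/-- From a family of subspaces with trivial intersection one can select at most
`finrank U` of them whose intersection with `U` is trivial. -/
lemma aux_exists_finset (W : Set (Submodule F V))
    (hW : ∀ x : V, x ≠ 0 → ∃ w ∈ W, x ∉ w) :
    ∀ (n : ℕ) (U : Submodule F V), finrank F U ≤ n →
      ∃ T : Finset (Submodule F V), ↑T ⊆ W ∧ T.card ≤ finrank F U ∧ U ⊓ T.inf id = ⊥ := by
  classical
  intro n
  induction n with
  | zero =>
      intro U hU
      have hUbot : U = ⊥ := by
        rw [← Submodule.finrank_eq_zero (S := U)]; omega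
      exact ⟨∅, by simp, by simp, by simp [hUbot]⟩
  | succ n ih =>
      intro U hU
      by_cases hUbot : U = ⊥
      · exact ⟨∅, by simp, by simp, by simp [hUbot]⟩
      · obtain ⟨x, hxU, hx0⟩ := Submodule.exists_mem_ne_zero_of_ne_bot hUbot
        obtain ⟨w, hwW, hxw⟩ := hW x hx0
        have hlt : U ⊓ w < U := by
          refine lt_of_le_of_ne inf_le_left (fun h => hxw ?_)
          have : U ≤ w := by rw [← h]; exact inf_le_right
          exact this hxU
        have hrk : finrank F ↥(U ⊓ w) < finrank F U :=
          Submodule.finrank_lt_finrank_of_lt hlt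
        obtain ⟨T, hTW, hTcard, hTinf⟩ := ih (U ⊓ w) (by omega)
        refine ⟨insert w T, ?_, ?_, ?_⟩
        · intro y hy
          rw [Finset.coe_insert, Set.mem_insert_iff] at hy
          rcases hy with rfl | h
          · exact hwW
          · exact hTW h
        · calc (insert w T).card ≤ T.card + 1 := Finset.card_insert_le _ _
            _ ≤ finrank F ↥(U ⊓ w) + 1 := by omega
            _ ≤ finrank F U := by omega
        · rw [Finset.inf_insert, id_eq, ← inf_assoc]
          exact hTinf

/-- Intersecting hyperplanes drops the dimension by at most one each time. -/
lemma aux_finrank_inf (T : Finset (Submodule F V))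
    (hT : ∀ w ∈ T, finrank F ↥w + 1 = finrank F V) :
    finrank F V ≤ finrank F ↥(T.inf id : Submodule F V) + T.card := by
  classical
  induction T using Finset.induction with
  | empty =>
      simp [finrank_top]
      exact (finrank_top F V).ge
  | @insert w T hwT ih =>
      have hih := ih (fun v hv => hT v (Finset.mem_insert_of_mem hv))
      have hw := hT w (Finset.mem_insert_self w T)
      have hsum := Submodule.finrank_sup_add_finrank_inf_eq w (T.inf id)
      have hle : finrank F ↥(w ⊔ T.inf id) ≤ finrank F V := Submodule.finrank_le _
      rw [Finset.inf_insert, id_eq, Finset.card_insert_of_notMem hwT]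
      omega

end helpers

/-- Let `q` be a prime power, let `V = (𝔽_q)^d`, and let `𝒲` be a set of subspaces of
`V` of codimension `1` such that the union of the subspaces in `𝒲` is all of `V` and
the intersection of the subspaces in `𝒲` is `{0}`. Then `2 ≤ d ≤ |𝒲| − q + 1`. -/
theorem stmt_11 {F : Type*} [Field F] [Fintype F] {q d : ℕ} (hq : Fintype.card F = q)
    (W : Set (Submodule F (Fin d → F)))
    (hcodim : ∀ w ∈ W, Module.finrank F ↥w + 1 = d)
    (hunion : ⋃ w ∈ W, (w : Set (Fin d → F)) = Set.univ)
    (hinter : ⋂ w ∈ W, (w : Set (Fin d → F)) = {0}) :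
    2 ≤ d ∧ d + q ≤ W.ncard + 1 := by
  classical
  have hq2 : 2 ≤ q := by
    rw [← hq]; exact Fintype.one_lt_card
  have hfrV : finrank F (Fin d → F) = d := Module.finrank_fin_fun F
  have hint : ∀ x : Fin d → F, x ≠ 0 → ∃ w ∈ W, x ∉ w := by
    intro x hx
    by_contra h
    push_neg at h
    have hx' : x ∈ ⋂ w ∈ W, (w : Set (Fin d → F)) := Set.mem_iInter₂.mpr h
    rw [hinter] at hx'
    exact hx hx'
  have hcov : ∀ x : Fin d → F, ∃ w ∈ W, x ∈ w := by
    intro x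
    have hx : x ∈ ⋃ w ∈ W, (w : Set (Fin d → F)) := by rw [hunion]; trivial
    simpa using hx
  -- d ≥ 2
  have hd2 : 2 ≤ d := by
    by_contra hd
    push_neg at hd
    interval_cases d
    · obtain ⟨w, hw, -⟩ := hcov 0
      have := hcodim w hw
      omega
    · obtain ⟨w, hw, h1⟩ := hcov 1
      have hw0 : finrank F ↥w = 0 := by have := hcodim w hw; omega
      have hwbot : w = ⊥ := Submodule.finrank_eq_zero.mp hw0
      rw [hwbot, Submodule.mem_bot] at h1
      have : (1 : F) = 0 := congrFun h1 0
      exact one_ne_zero this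
  refine ⟨hd2, ?_⟩
  -- choose d hyperplanes with trivial intersection
  obtain ⟨T, hTW, hTcard, hTinf⟩ := aux_exists_finset W hint d ⊤ (by simp [hfrV])
  rw [top_inf_eq] at hTinf
  have hTle : T.card ≤ d := by
    have : finrank F (⊤ : Submodule F (Fin d → F)) = d := by simp [hfrV]
    omega
  have hcodim' : ∀ w ∈ T, finrank F ↥w + 1 = finrank F (Fin d → F) := by
    intro w hw; rw [hfrV]; exact hcodim w (hTW hw)
  have hTd : T.card = d := by
    have h2 := aux_finrank_inf T hcodim'
    rw [hTinf] at h2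
    simp [hfrV, finrank_bot] at h2
    omega
  -- enumerate them
  let Hf : Fin d → Submodule F (Fin d → F) := fun i => (T.equivFin.symm (Fin.cast hTd.symm i) : _)
  have HmemT : ∀ i, Hf i ∈ T := fun i => (T.equivFin.symm (Fin.cast hTd.symm i)).2
  have Hinj : Function.Injective Hf := by
    intro i j hij
    have := Subtype.ext hij
    have := T.equivFin.symm.injective this
    simpa [Fin.ext_iff] using congrArg Fin.val this
  have Hsurj : ∀ w ∈ T, ∃ i, Hf i = w := by
    intro w hw
    refine ⟨Fin.cast hTd (T.equivFin ⟨w, hw⟩), ?_⟩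
    simp [Hf]
  -- key vectors
  have key : ∀ i : Fin d, ∃ v : Fin d → F, v ≠ 0 ∧ v ∉ Hf i ∧ ∀ j, j ≠ i → v ∈ Hf j := by
    intro i
    set N : Submodule F (Fin d → F) := (T.erase (Hf i)).inf id with hN
    have hNrk : 1 ≤ finrank F ↥N := by
      have h := aux_finrank_inf (T.erase (Hf i))
        (fun w hw => hcodim' w (Finset.mem_of_mem_erase hw))
      rw [Finset.card_erase_of_mem (HmemT i)] at h
      rw [hfrV] at h
      rw [hN]
      omega
    have hNbot : N ≠ ⊥ := by
      intro h
      rw [h, finrank_bot] at hNrk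
      omega
    obtain ⟨v, hvN, hv0⟩ := Submodule.exists_mem_ne_zero_of_ne_bot hNbot
    have hTsplit : Hf i ⊓ N = ⊥ := by
      have h2 : (insert (Hf i) (T.erase (Hf i))).inf id = ⊥ := by
        rw [Finset.insert_erase (HmemT i)]; exact hTinf
      rw [Finset.inf_insert, id_eq] at h2
      rw [hN]
      exact h2
    refine ⟨v, hv0, ?_, ?_⟩
    · intro hvH
      have : v ∈ Hf i ⊓ N := ⟨hvH, hvN⟩
      rw [hTsplit, Submodule.mem_bot] at this
      exact hv0 this
    · intro j hji
      have hmem : Hf j ∈ T.erase (Hf i) :=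
        Finset.mem_erase.mpr ⟨fun h => hji (Hinj h), HmemT j⟩
      exact (Finset.inf_le hmem : N ≤ id (Hf j)) hvN
  choose e he0 heH heMem using key
  -- scalar lemma
  have smul_mem_iff : ∀ (i : Fin d) (c : F), c • e i ∈ Hf i → c = 0 := by
    intro i c hc
    by_contra h
    have : e i ∈ Hf i := by
      have h2 := (Hf i).smul_mem c⁻¹ hc
      rwa [smul_smul, inv_mul_cancel₀ h, one_smul] at h2
    exact heH i this
  -- linear independence
  have hli : LinearIndependent F e := by
    rw [linearIndependent_iff']
    intro s g hs i hi
    have h1 : g i • e i + ∑ j ∈ s.erase i, g j • e j = 0 := by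
      rw [Finset.add_sum_erase s (fun j => g j • e j) hi]; exact hs
    have h2 : g i • e i ∈ Hf i := by
      rw [eq_neg_of_add_eq_zero_left h1]
      exact Submodule.neg_mem _ (Submodule.sum_mem _ fun j hj =>
        Submodule.smul_mem _ _ (heMem j i (Finset.ne_of_mem_erase hj).symm))
    exact smul_mem_iff i (g i) h2
  have hne : Nonempty (Fin d) := ⟨⟨0, by omega⟩⟩
  have hcardFin : Fintype.card (Fin d) = finrank F (Fin d → F) := by simp [hfrV]
  let B : Basis (Fin d) F (Fin d → F) := basisOfLinearIndependentOfCardEqFinrank hli hcardFin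
  have hB : ∀ i, B i = e i := fun i => by
    simp [B, coe_basisOfLinearIndependentOfCardEqFinrank]
  -- coordinates vanish on the corresponding hyperplane
  have hrepr0 : ∀ (x : Fin d → F) (i : Fin d), x ∈ Hf i → B.repr x i = 0 := by
    intro x i hx
    apply smul_mem_iff i
    have hsum : B.repr x i • e i = x - ∑ j ∈ Finset.univ.erase i, B.repr x j • e j := by
      rw [eq_sub_iff_add_eq, Finset.add_sum_erase _ (fun j => B.repr x j • e j)
        (Finset.mem_univ i)]
      have := B.sum_repr x
      simpa [hB] using this
    rw [hsum]
    exact Submodule.sub_mem _ hx (Submodule.sum_mem _ fun j hj =>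
      Submodule.smul_mem _ _ (heMem j i (Finset.ne_of_mem_erase hj).symm))
  -- every hyperplane in W misses some basis vector
  have hexists_i : ∀ H ∈ W, ∃ i, e i ∉ H := by
    intro H hH
    by_contra h
    push_neg at h
    have htop : (⊤ : Submodule F (Fin d → F)) ≤ H := by
      rw [← B.span_eq, Submodule.span_le]
      rintro _ ⟨i, rfl⟩
      rw [hB i]
      exact h i
    have hHtop : H = ⊤ := top_le_iff.mp htop
    have := hcodim H hH
    rw [hHtop] at this
    simp [finrank_top, hfrV] at this
  -- the set of vectors with all coordinates nonzero
  set Sf : Finset (Fin d → F) :=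
    Finset.univ.filter (fun x => ∀ i, B.repr x i ≠ 0) with hSf
  have hreprSymm : ∀ (f : Fin d → F) (i : Fin d),
      B.repr (B.equivFun.symm f) i = f i := by
    intro f i
    rw [← B.equivFun_apply, B.equivFun.apply_symm_apply]
  have hcardNZ : Fintype.card {c : F // c ≠ 0} = q - 1 := by
    rw [Fintype.card_congr unitsEquivNeZero.symm, Fintype.card_units, hq]
  -- lower bound on Sf
  have hSf_lower : (q - 1) ^ d ≤ Sf.card := by
    have hmap : ∀ g : Fin d → {c : F // c ≠ 0},
        (B.equivFun.symm fun i => (g i : F)) ∈ Sf := by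
      intro g
      rw [hSf, Finset.mem_filter]
      refine ⟨Finset.mem_univ _, fun i => ?_⟩
      rw [hreprSymm]
      exact (g i).2
    have hle : (Finset.univ : Finset (Fin d → {c : F // c ≠ 0})).card ≤ Sf.card := by
      apply Finset.card_le_card_of_injOn
        (fun g : Fin d → {c : F // c ≠ 0} => B.equivFun.symm fun i => (g i : F))
        (fun g _ => hmap g)
      intro g1 _ g2 _ hg
      funext i
      have := B.equivFun.symm.injective hg
      exact Subtype.ext (congrFun this i)
    rw [Finset.card_univ, Fintype.card_fun, hcardNZ, Fintype.card_fin] at hle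
    exact hle
  -- upper bound per hyperplane
  have hupper : ∀ H ∈ W, (Sf.filter (· ∈ H)).card ≤ (q - 1) ^ (d - 1) := by
    intro H hH
    obtain ⟨i, hi⟩ := hexists_i H hH
    have hcard_ne : Fintype.card {j : Fin d // j ≠ i} = d - 1 := by
      have h1 : Fintype.card {j : Fin d // j ≠ i}
          = Fintype.card (Fin d) - Fintype.card {j : Fin d // j = i} :=
        Fintype.card_subtype_compl _
      rw [Fintype.card_subtype_eq, Fintype.card_fin] at h1
      exact h1
    set t : Finset ({j : Fin d // j ≠ i} → F) :=
      Finset.univ.filter (fun g => ∀ j, g j ≠ 0) with ht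
    have htcard : t.card = (q - 1) ^ (d - 1) := by
      rw [ht, ← Fintype.card_subtype]
      rw [Fintype.card_congr (Equiv.subtypePiEquivPi (p := fun _ (b : F) => b ≠ 0))]
      rw [Fintype.card_pi]
      simp only [hcardNZ]
      rw [Finset.prod_const, Finset.card_univ, hcard_ne]
    rw [← htcard]
    apply Finset.card_le_card_of_injOn (fun x (j : {j : Fin d // j ≠ i}) => B.repr x j.1)
    · intro x hx
      rw [ht, Finset.mem_coe, Finset.mem_filter]
      refine ⟨Finset.mem_univ _, fun j => ?_⟩
      have hxS := (Finset.mem_filter.mp (Finset.mem_filter.mp hx).1).2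
      exact hxS j.1
    · intro x hx y hy hxy
      have hxH : x ∈ H := (Finset.mem_filter.mp hx).2
      have hyH : y ∈ H := (Finset.mem_filter.mp hy).2
      have hrepr_eq : ∀ j : Fin d, j ≠ i → B.repr (x - y) j = 0 := by
        intro j hj
        have := congrFun hxy ⟨j, hj⟩
        simp only [map_sub, Finsupp.sub_apply]
        simpa using sub_eq_zero.mpr this
      have hxy_mem : x - y ∈ H := Submodule.sub_mem _ hxH hyH
      have hdecomp : x - y = B.repr (x - y) i • e i := by
        have hs := B.sum_repr (x - y)
        rw [Finset.sum_eq_single i] at hs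
        · rw [← hB i]; exact hs.symm
        · intro j _ hj
          rw [hrepr_eq j hj, zero_smul]
        · intro hcon
          exact absurd (Finset.mem_univ i) hcon
      have hc0 : B.repr (x - y) i = 0 := by
        by_contra hc
        apply hi
        have hmem : B.repr (x - y) i • e i ∈ H := hdecomp ▸ hxy_mem
        have h2 := H.smul_mem (B.repr (x - y) i)⁻¹ hmem
        rwa [smul_smul, inv_mul_cancel₀ hc, one_smul] at h2
      have : x - y = 0 := by rw [hdecomp, hc0, zero_smul]
      exact sub_eq_zero.mp this
  -- covering
  have hWfin : W.Finite := Set.toFinite W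
  have hTsub : T ⊆ hWfin.toFinset := fun w hw => hWfin.mem_toFinset.mpr (hTW hw)
  set Wf := hWfin.toFinset with hWf
  have hScover : Sf ⊆ (Wf \ T).biUnion (fun H => Sf.filter (· ∈ H)) := by
    intro x hx
    obtain ⟨w, hwW, hxw⟩ := hcov x
    refine Finset.mem_biUnion.mpr ⟨w, ?_, Finset.mem_filter.mpr ⟨hx, hxw⟩⟩
    rw [Finset.mem_sdiff]
    refine ⟨hWfin.mem_toFinset.mpr hwW, fun hwT => ?_⟩
    obtain ⟨i, rfl⟩ := Hsurj w hwT
    have h1 := hrepr0 x i hxw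
    have h2 := (Finset.mem_filter.mp hx).2 i
    exact h2 h1
  have hcount : (q - 1) ^ d ≤ (Wf \ T).card * (q - 1) ^ (d - 1) := by
    calc (q - 1) ^ d ≤ Sf.card := hSf_lower
      _ ≤ ((Wf \ T).biUnion (fun H => Sf.filter (· ∈ H))).card :=
          Finset.card_le_card hScover
      _ ≤ ∑ H ∈ Wf \ T, (Sf.filter (· ∈ H)).card := Finset.card_biUnion_le
      _ ≤ ∑ _H ∈ Wf \ T, (q - 1) ^ (d - 1) := by
          refine Finset.sum_le_sum fun H hH => hupper H ?_
          exact hWfin.mem_toFinset.mp (Finset.mem_sdiff.mp hH).1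
      _ = (Wf \ T).card * (q - 1) ^ (d - 1) := by
          rw [Finset.sum_const, smul_eq_mul]
  have hpow : (q - 1) ^ d = (q - 1) * (q - 1) ^ (d - 1) := by
    rw [← pow_succ']
    congr 1
    omega
  have hq1pos : 0 < (q - 1) ^ (d - 1) := Nat.pow_pos (by omega)
  have hW2 : q - 1 ≤ (Wf \ T).card := by
    have h2 : (q - 1) * (q - 1) ^ (d - 1) ≤ (Wf \ T).card * (q - 1) ^ (d - 1) := by
      rw [← hpow]; exact hcount
    exact Nat.le_of_mul_le_mul_right h2 hq1pos
  have hsdiff : (Wf \ T).card = Wf.card - T.card := Finset.card_sdiff_of_subset hTsub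
  have hTleW : T.card ≤ Wf.card := Finset.card_le_card hTsub
  have hncard : W.ncard = Wf.card := by
    rw [hWf, Set.ncard_eq_toFinset_card' W]
    congr 1
    exact (Set.Finite.toFinset_eq_toFinset _).symm
  omega
end

section
/- Let q be a prime power and let V = (𝔽_q)^d with d ≥ 2. Then there exists a set 𝒲 of subspaces of V of codimension 1, with |𝒲| = d + q − 1, such that the union of the subspaces in 𝒲 is all of V and the intersection of the subspaces in 𝒲 is {0}. -/
lemma aux_ker_finrank {d : ℕ} {F : Type*} [Field F] (f : (Fin d → F) →ₗ[F] F)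
    (v : Fin d → F) (hv : f v ≠ 0) :
    Module.finrank F (LinearMap.ker f) + 1 = d := by
  have hr : LinearMap.range f = ⊤ := by
    rw [LinearMap.range_eq_top]
    intro y
    exact ⟨(y / f v) • v, by rw [map_smul, smul_eq_mul, div_mul_cancel₀ y hv]⟩
  have h := LinearMap.finrank_range_add_finrank_ker f
  rw [hr] at h
  simpa [finrank_top, Module.finrank_self, Nat.add_comm] using h

/-- Let `q` be a prime power and let `V = (𝔽_q)^d` with `d ≥ 2`. Then there exists a
set `𝒲` of subspaces of `V` of codimension `1`, with `|𝒲| = d + q − 1`, whose union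
is all of `V` and whose intersection is `{0}`. -/
theorem stmt_12 {F : Type*} [Field F] [Fintype F] {q d : ℕ} (hq : Fintype.card F = q)
    (hd : 2 ≤ d) :
    ∃ W : Set (Submodule F (Fin d → F)),
      (∀ w ∈ W, Module.finrank F ↥w + 1 = d) ∧
      W.ncard + 1 = d + q ∧
      (⋃ w ∈ W, (w : Set (Fin d → F))) = Set.univ ∧
      (⋂ w ∈ W, (w : Set (Fin d → F))) = {0} := by
  classical
  have h0 : (0:ℕ) < d := by omega
  have h1 : (1:ℕ) < d := hd
  set i0 : Fin d := ⟨0, h0⟩ with hi0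
  set i1 : Fin d := ⟨1, h1⟩ with hi1
  let pr : Fin d → ((Fin d → F) →ₗ[F] F) := fun i => LinearMap.proj i
  let φ : F ⊕ Fin (d-1) → Submodule F (Fin d → F) :=
    fun t => match t with
    | Sum.inl c => LinearMap.ker (pr i0 - c • pr i1)
    | Sum.inr j => LinearMap.ker (pr ⟨j.1+1, by have := j.2; omega⟩)
  -- membership characterizations
  have memL : ∀ (c : F) (x : Fin d → F), x ∈ φ (Sum.inl c) ↔ x i0 - c * x i1 = 0 := by
    intro c x
    simp [φ, pr, LinearMap.mem_ker, LinearMap.sub_apply, LinearMap.smul_apply]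
  have memR : ∀ (j : Fin (d-1)) (x : Fin d → F),
      x ∈ φ (Sum.inr j) ↔ x ⟨j.1+1, by have := j.2; omega⟩ = 0 := by
    intro j x
    simp [φ, pr, LinearMap.mem_ker]
  have hinj : Function.Injective φ := by
    intro a b hab
    match a, b with
    | Sum.inl c, Sum.inl c' =>
      by_contra hne
      have hcc : c ≠ c' := by simpa using hne
      -- vector v with v i0 = c, v i1 = 1, else 0
      set v : Fin d → F := fun i => if i = i0 then c else if i = i1 then 1 else 0 with hv
      have h01 : i0 ≠ i1 := by simp [hi0, hi1, Fin.ext_iff]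
      have h01' : i1 ≠ i0 := h01.symm
      have hvmem : v ∈ φ (Sum.inl c) := by
        rw [memL]; simp [hv, h01, h01']
      rw [hab, memL] at hvmem
      simp [hv, h01, h01'] at hvmem
      exact hcc (sub_eq_zero.mp hvmem)
    | Sum.inl c, Sum.inr j =>
      exfalso
      -- e_0 is in φ (inr j) but not φ (inl c)
      set v : Fin d → F := fun i => if i = i0 then 1 else 0 with hv
      have hne : (⟨j.1+1, by have := j.2; omega⟩ : Fin d) ≠ i0 := by
        simp [hi0, Fin.ext_iff]
      have hvmem : v ∈ φ (Sum.inr j) := by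
        rw [memR]; simp [hv, hne]
      rw [← hab, memL] at hvmem
      have h01 : i1 ≠ i0 := by simp [hi0, hi1, Fin.ext_iff]
      simp [hv, h01] at hvmem
    | Sum.inr j, Sum.inl c =>
      exfalso
      set v : Fin d → F := fun i => if i = i0 then 1 else 0 with hv
      have hne : (⟨j.1+1, by have := j.2; omega⟩ : Fin d) ≠ i0 := by
        simp [hi0, Fin.ext_iff]
      have hvmem : v ∈ φ (Sum.inr j) := by
        rw [memR]; simp [hv, hne]
      rw [hab, memL] at hvmem
      have h01 : i1 ≠ i0 := by simp [hi0, hi1, Fin.ext_iff]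
      simp [hv, h01] at hvmem
    | Sum.inr j, Sum.inr j' =>
      by_contra hne
      have hjj : j ≠ j' := by simpa using hne
      set k : Fin d := ⟨j.1+1, by have := j.2; omega⟩ with hk
      set v : Fin d → F := fun i => if i = k then 0 else 1 with hv
      have hvmem : v ∈ φ (Sum.inr j) := by rw [memR]; simp [hv, hk]
      rw [hab, memR] at hvmem
      have hkne : (⟨j'.1+1, by have := j'.2; omega⟩ : Fin d) ≠ k := by
        simp only [hk, Fin.ext_iff, ne_eq]
        intro h
        exact hjj (Fin.ext (by omega)).symm
      simp [hv, hkne] at hvmem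
  refine ⟨Set.range φ, ?_, ?_, ?_, ?_⟩
  · rintro w ⟨t, rfl⟩
    match t with
    | Sum.inl c =>
      refine aux_ker_finrank _ (fun i => if i = i0 then 1 else 0) ?_
      have h01 : i1 ≠ i0 := by simp [hi0, hi1, Fin.ext_iff]
      simp [pr, h01]
    | Sum.inr j =>
      refine aux_ker_finrank _ (fun i => if i = (⟨j.1+1, by have := j.2; omega⟩ : Fin d) then 1 else 0) ?_
      simp [pr]
  · rw [← Set.image_univ, Set.ncard_image_of_injective _ hinj]
    have : (Set.univ : Set (F ⊕ Fin (d-1))).ncard = q + (d-1) := by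
      rw [Set.ncard_univ, Nat.card_sum]
      simp [Nat.card_eq_fintype_card, hq]
    omega
  · ext x
    simp only [Set.mem_iUnion, Set.mem_univ, iff_true]
    by_cases hx1 : x i1 = 0
    · refine ⟨φ (Sum.inr ⟨0, by omega⟩), ⟨Sum.inr ⟨0, by omega⟩, rfl⟩, ?_⟩
      rw [SetLike.mem_coe, memR]
      convert hx1 using 2
    · exact ⟨φ (Sum.inl (x i0 / x i1)), ⟨Sum.inl _, rfl⟩, by
        rw [SetLike.mem_coe, memL]; field_simp; ring⟩
  · ext x
    simp only [Set.mem_iInter, Set.mem_singleton_iff]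
    constructor
    · intro hx
      have hall : ∀ t, x ∈ φ t := fun t => hx (φ t) ⟨t, rfl⟩
      have hx1 : x i1 = 0 := by
        have := (memR ⟨0, by omega⟩ x).mp (hall (Sum.inr ⟨0, by omega⟩))
        convert this using 2
      have hx0 : x i0 = 0 := by
        have := (memL 0 x).mp (hall (Sum.inl 0))
        simpa using this
      funext i
      rcases Nat.eq_zero_or_pos i.1 with h | h
      · have : i = i0 := Fin.ext (by simpa [hi0] using h)
        rw [this, hx0]; rfl
      · have hi : i.1 - 1 < d - 1 := by have := i.2; omega
        have := (memR ⟨i.1-1, hi⟩ x).mp (hall (Sum.inr ⟨i.1-1, hi⟩))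
        have hii : (⟨(i.1-1)+1, by omega⟩ : Fin d) = i := Fin.ext (by simp; omega)
        rw [hii] at this
        rw [this]; rfl
    · rintro rfl w ⟨t, rfl⟩
      exact (φ t).zero_mem
end

section
/- Let T be a nonabelian finite simple group, let n ≥ 1, and let K be a finite group that is the internal direct product of subgroups T₁,…,T_n, each isomorphic to T, which are precisely the minimal normal subgroups of K. Let G be a subgroup of Aut(K), acting naturally on the set {T₁,…,T_n}, and identify K with the group Inn(K) of inner automorphisms inside Aut(K). Suppose that (1) the image in Aut(T₁) of the setwise stabiliser G_{T₁} (restricting each automorphism stabilising T₁ to T₁) contains Inn(T₁), and (2) G acts primitively on {T₁,…,T_n}. Then either G ∩ K = 1, or G ∩ K ≅ T, or K ≤ G. -/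
set_option linter.unusedSectionVars false
set_option linter.unusedVariables false

namespace Stmt14

variable {K : Type*} [Group K] {n : ℕ} {Tsub : Fin n → Subgroup K}

/-- complement of the i-th factor -/
def C (Tsub : Fin n → Subgroup K) (i : Fin n) : Subgroup K := ⨆ (j) (_ : j ≠ i), Tsub j

theorem normal_iSup {ι : Sort*} (f : ι → Subgroup K) (h : ∀ i, (f i).Normal) :
    (⨆ i, f i).Normal := by
  constructor
  intro x hx g
  have h1 : ∀ i, Subgroup.map (MulAut.conj g).toMonoidHom (f i) = f i := by
    intro i
    ext y
    constructor
    · rintro ⟨z, hz, rfl⟩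
      exact (h i).conj_mem z hz g
    · intro hy
      refine ⟨g⁻¹ * y * g, by simpa using (h i).conj_mem y hy g⁻¹, ?_⟩
      simp [MulAut.conj_apply]
      group
  have h2 : Subgroup.map (MulAut.conj g).toMonoidHom (⨆ i, f i) = ⨆ i, f i := by
    rw [Subgroup.map_iSup]; simp only [h1]
  rw [← h2]
  exact ⟨x, hx, by simp [MulAut.conj_apply]⟩

theorem C_normal (hnormal : ∀ i, (Tsub i).Normal) (i : Fin n) : (C Tsub i).Normal :=
  normal_iSup _ fun j => normal_iSup _ fun _ => hnormal j

theorem le_C {i j : Fin n} (h : j ≠ i) : Tsub j ≤ C Tsub i :=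
  le_iSup₂_of_le j h le_rfl

theorem sup_C (hsup : (⨆ i, Tsub i) = ⊤) (i : Fin n) : Tsub i ⊔ C Tsub i = ⊤ := by
  rw [← hsup]
  apply le_antisymm
  · exact sup_le (le_iSup _ i) (iSup₂_le fun j _ => le_iSup _ j)
  · refine iSup_le fun j => ?_
    rcases eq_or_ne j i with rfl | h
    · exact le_sup_left
    · exact le_trans (le_C h) le_sup_right

theorem existsUnique_pi (hnormal : ∀ i, (Tsub i).Normal) (hsup : (⨆ i, Tsub i) = ⊤)
    (hindep : iSupIndep Tsub) (i : Fin n) (x : K) :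
    ∃! t, t ∈ Tsub i ∧ t⁻¹ * x ∈ C Tsub i := by
  haveI := C_normal hnormal i
  have hx : x ∈ Tsub i ⊔ C Tsub i := by rw [sup_C hsup]; trivial
  rw [← SetLike.mem_coe, Subgroup.mul_normal] at hx
  obtain ⟨t, ht, c, hc, rfl⟩ := hx
  refine ⟨t, ⟨ht, by simpa using hc⟩, ?_⟩
  rintro t' ⟨ht', hc'⟩
  have h1 : t'⁻¹ * t ∈ Tsub i := mul_mem (inv_mem ht') ht
  have h2 : t'⁻¹ * t ∈ C Tsub i := by
    have hc2 : c ∈ C Tsub i := hc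
    have := mul_mem hc' (inv_mem hc2)
    simpa [mul_assoc] using this
  have h3 : t'⁻¹ * t = 1 := Subgroup.disjoint_def.mp (hindep i) h1 h2
  exact inv_mul_eq_one.mp h3

section Pi
variable {π : Fin n → K → K}
  (hmem : ∀ i x, π i x ∈ Tsub i)
  (hCmem : ∀ i x, (π i x)⁻¹ * x ∈ C Tsub i)
  (huniq : ∀ i x t, t ∈ Tsub i → t⁻¹ * x ∈ C Tsub i → t = π i x)

include huniq

theorem pi_eq (i : Fin n) (x t : K) (h1 : t ∈ Tsub i) (h2 : t⁻¹ * x ∈ C Tsub i) :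
    π i x = t := (huniq i x t h1 h2).symm

theorem pi_of_mem {i : Fin n} {x : K} (h : x ∈ Tsub i) : π i x = x :=
  pi_eq huniq i x x h (by simpa using one_mem _)

theorem pi_of_mem_C {i : Fin n} {x : K} (h : x ∈ C Tsub i) : π i x = 1 :=
  pi_eq huniq i x 1 (one_mem _) (by simpa using h)

theorem pi_of_mem_ne {i j : Fin n} {x : K} (h : x ∈ Tsub j) (hne : j ≠ i) : π i x = 1 :=
  pi_of_mem_C huniq (le_C hne h)

theorem pi_one (i : Fin n) : π i (1 : K) = 1 := pi_of_mem_C huniq (one_mem _)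

include hmem hCmem

theorem pi_mul (hnormal : ∀ i, (Tsub i).Normal) (i : Fin n) (x y : K) :
    π i (x * y) = π i x * π i y := by
  haveI : (C Tsub i).Normal := C_normal hnormal i
  refine pi_eq huniq i (x * y) _ (mul_mem (hmem i x) (hmem i y)) ?_
  have h1 : (π i y)⁻¹ * ((π i x)⁻¹ * x) * ((π i y)⁻¹)⁻¹ ∈ C Tsub i :=
    this.conj_mem _ (hCmem i x) _
  have h2 := mul_mem h1 (hCmem i y)
  have : (π i x * π i y)⁻¹ * (x * y)
      = ((π i y)⁻¹ * ((π i x)⁻¹ * x) * ((π i y)⁻¹)⁻¹) * ((π i y)⁻¹ * y) := by group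
  rw [this]; exact h2

omit hmem hCmem huniq in
theorem biSup_le_C {S : Finset (Fin n)} {k : Fin n} (hk : k ∉ S) :
    (⨆ j ∈ S, Tsub j) ≤ C Tsub k :=
  iSup₂_le fun j hj => le_C (fun h => hk (h ▸ hj))

theorem mem_of_pi (hnormal : ∀ i, (Tsub i).Normal) (hsup : (⨆ i, Tsub i) = ⊤)
    (i : Fin n) (x : K) (h : ∀ j, j ≠ i → π j x = 1) : x ∈ Tsub i := by
  have claim : ∀ S : Finset (Fin n), ∀ y : K, y ∈ (⨆ j ∈ S, Tsub j) →
      (∀ j, j ≠ i → π j y = 1) → y ∈ Tsub i := by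
    intro S
    induction S using Finset.induction_on with
    | empty =>
      intro y hy _
      simp only [Finset.notMem_empty, iSup_false, iSup_bot, Subgroup.mem_bot] at hy
      · rw [hy]; exact one_mem _
    | @insert k S hk IH =>
      intro y hy hπ
      rw [show (⨆ j ∈ insert k S, Tsub j) = Tsub k ⊔ ⨆ j ∈ S, Tsub j by
        simp [Finset.mem_insert, iSup_or, iSup_sup_eq]] at hy
      haveI : (⨆ j ∈ S, Tsub j).Normal := normal_iSup _ fun j => normal_iSup _ fun _ => hnormal j
      rw [← SetLike.mem_coe, Subgroup.mul_normal] at hy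
      obtain ⟨t, ht, c, hc, hy2⟩ := hy
      have hy' : y = t * c := hy2.symm
      subst hy'
      rcases eq_or_ne k i with hki | hki
      · subst hki
        have hc' : c ∈ Tsub k := by
          refine IH c hc fun j hj => ?_
          have h1 : π j (t * c) = π j t * π j c := pi_mul hmem hCmem huniq hnormal j t c
          have h2 : π j t = 1 := pi_of_mem_ne huniq ht (fun hh => hj hh.symm)
          have := hπ j hj
          rw [h1, h2, one_mul] at this
          exact this
        exact mul_mem ht hc'
      · have hπc : π k c = 1 := pi_of_mem_C huniq (biSup_le_C hk hc)
        have h1 : π k (t * c) = π k t * π k c := pi_mul hmem hCmem huniq hnormal k t c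
        have h2 : π k t = t := pi_of_mem huniq ht
        have h3 := hπ k hki
        rw [h1, h2, hπc, mul_one] at h3
        rw [show t * c = c by rw [h3, one_mul]]
        refine IH c hc fun j hj => ?_
        have h5 : π j c = π j (t * c) := by
          rw [pi_mul hmem hCmem huniq hnormal j t c, h3, pi_one huniq, one_mul]
        rw [h5]
        exact hπ j hj
  refine claim Finset.univ x ?_ h
  have : (⨆ j ∈ Finset.univ, Tsub j) = ⨆ j, Tsub j := by simp
  rw [this, hsup]; trivial

theorem eq_one_of_pi (hnormal : ∀ i, (Tsub i).Normal) (hsup : (⨆ i, Tsub i) = ⊤)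
    (hn : 1 ≤ n) (x : K) (h : ∀ j, π j x = 1) : x = 1 := by
  have hx : x ∈ Tsub ⟨0, hn⟩ := mem_of_pi hmem hCmem huniq hnormal hsup _ x fun j _ => h j
  rw [← pi_of_mem huniq hx, h]

omit hmem hCmem huniq in
theorem map_C_eq (e : MulAut K) (p : Equiv.Perm (Fin n))
    (hp : ∀ j, (Tsub j).map e.toMonoidHom = Tsub (p j)) (i : Fin n) :
    (C Tsub i).map e.toMonoidHom = C Tsub (p i) := by
  have h1 : (C Tsub i).map e.toMonoidHom = ⨆ (j) (_ : j ≠ i), Tsub (p j) := by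
    unfold C
    rw [Subgroup.map_iSup]
    refine iSup_congr fun j => ?_
    rw [Subgroup.map_iSup]
    exact iSup_congr fun _ => hp j
  rw [h1]
  apply le_antisymm
  · refine iSup₂_le fun j hj => ?_
    exact le_C (fun hc => hj (p.injective hc))
  · refine iSup₂_le fun k hk => ?_
    refine le_iSup₂_of_le (p.symm k) (fun h => hk (by rw [← h, p.apply_symm_apply])) ?_
    rw [p.apply_symm_apply]

theorem pi_equivariant (e : MulAut K) (p : Equiv.Perm (Fin n))
    (hp : ∀ j, (Tsub j).map e.toMonoidHom = Tsub (p j)) (i : Fin n) (x : K) :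
    π (p i) (e x) = e (π i x) := by
  refine pi_eq huniq (p i) (e x) _ ?_ ?_
  · rw [← hp i]; exact ⟨_, hmem i x, rfl⟩
  · rw [← map_C_eq e p hp i]
    exact ⟨(π i x)⁻¹ * x, hCmem i x, by simp⟩

end Pi

section Simple

variable {T : Type*} [Group T] [IsSimpleGroup T]

theorem bot_or_eq_of_conj (i : Fin n) (hiso : Nonempty (↥(Tsub i) ≃* T)) (H : Subgroup K)
    (hle : H ≤ Tsub i) (hconj : ∀ t ∈ Tsub i, ∀ h ∈ H, t * h * t⁻¹ ∈ H) :
    H = ⊥ ∨ H = Tsub i := by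
  obtain ⟨e⟩ := hiso
  haveI : Nontrivial ↥(Tsub i) := e.toEquiv.nontrivial
  haveI : IsSimpleGroup ↥(Tsub i) :=
    IsSimpleGroup.isSimpleGroup_of_surjective e.symm.toMonoidHom e.symm.surjective
  have hnorm : (H.subgroupOf (Tsub i)).Normal := by
    constructor
    intro x hx g
    rw [Subgroup.mem_subgroupOf] at hx ⊢
    exact hconj g g.2 x hx
  rcases hnorm.eq_bot_or_eq_top with h | h
  · left; exact (Subgroup.subgroupOf_eq_bot.mp h).eq_bot_of_le hle
  · right; exact le_antisymm hle (Subgroup.subgroupOf_eq_top.mp h)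

theorem exists_noncomm (hT : ∃ a b : T, a * b ≠ b * a) (i : Fin n)
    (e : ↥(Tsub i) ≃* T) : ∃ a b : ↥(Tsub i), a * b ≠ b * a := by
  obtain ⟨a, b, hab⟩ := hT
  exact ⟨e.symm a, e.symm b, fun h => hab (by
    have := congrArg e h
    simpa using this)⟩

theorem Tsub_ne_bot (hT : ∃ a b : T, a * b ≠ b * a) (i : Fin n)
    (hiso : Nonempty (↥(Tsub i) ≃* T)) : Tsub i ≠ ⊥ := by
  obtain ⟨e⟩ := hiso
  obtain ⟨a, b, hab⟩ := exists_noncomm hT i e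
  intro hbot
  apply hab
  have ha : (a : K) ∈ (⊥ : Subgroup K) := hbot ▸ a.2
  have hb : (b : K) ∈ (⊥ : Subgroup K) := hbot ▸ b.2
  rw [Subgroup.mem_bot] at ha hb
  ext
  push_cast
  rw [ha, hb]

open scoped commutatorElement in
theorem le_of_commutators (hT : ∃ a b : T, a * b ≠ b * a) (i : Fin n)
    (hiso : Nonempty (↥(Tsub i) ≃* T)) (H : Subgroup K) (hle : H ≤ Tsub i)
    (hcomm : ∀ a ∈ Tsub i, ∀ b ∈ Tsub i, a * b * a⁻¹ * b⁻¹ ∈ H) : Tsub i ≤ H := by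
  obtain ⟨e⟩ := hiso
  haveI : Nontrivial ↥(Tsub i) := e.toEquiv.nontrivial
  haveI : IsSimpleGroup ↥(Tsub i) :=
    IsSimpleGroup.isSimpleGroup_of_surjective e.symm.toMonoidHom e.symm.surjective
  have h1 : commutator ↥(Tsub i) = ⊤ := by
    rcases (Subgroup.commutator_normal (⊤ : Subgroup ↥(Tsub i)) ⊤).eq_bot_or_eq_top with h | h
    · exfalso
      obtain ⟨a, b, hab⟩ := exists_noncomm hT i e
      apply hab
      have := Subgroup.commutator_eq_bot_iff_le_centralizer.mp h
      have hb := this (Subgroup.mem_top b)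
      rw [Subgroup.mem_centralizer_iff] at hb
      exact (hb a (by trivial))
    · rw [commutator_def]; exact h
  have h2 : commutator ↥(Tsub i) ≤ H.subgroupOf (Tsub i) := by
    rw [commutator_def, Subgroup.commutator_le]
    intro g _ h _
    rw [Subgroup.mem_subgroupOf]
    have : ((⁅g, h⁆ : ↥(Tsub i)) : K) = (g : K) * h * (g : K)⁻¹ * (h : K)⁻¹ := by
      rw [commutatorElement_def]; push_cast; ring_nf
    rw [this]
    exact hcomm g g.2 h h.2
  intro x hx
  have : (⟨x, hx⟩ : ↥(Tsub i)) ∈ H.subgroupOf (Tsub i) := by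
    apply h2; rw [h1]; trivial
  rwa [Subgroup.mem_subgroupOf] at this

end Simple
end Stmt14

/-- Let `T` be a nonabelian finite simple group and let `K` be a finite group that is
the internal direct product of subgroups `T₁,…,T_n` (`n ≥ 1`), each isomorphic to `T`,
which are precisely the minimal normal subgroups of `K`. Let `G ≤ Aut(K)`, acting
naturally on `{T₁,…,T_n}` (encoded by the permutations `σ g` of the indices), and
identify `K` with `Inn(K) ≤ Aut(K)` via conjugation. If (1) the image in `Aut(T₁)` of
the setwise stabiliser `G_{T₁}` contains `Inn(T₁)`, and (2) `G` acts primitively on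
`{T₁,…,T_n}`, then either `G ∩ K = 1`, or `G ∩ K ≅ T`, or `K ≤ G`. -/
theorem stmt_14 {T K : Type*} [Group T] [Finite T] [IsSimpleGroup T]
    (hT : ∃ a b : T, a * b ≠ b * a) [Group K] [Finite K] {n : ℕ} (hn : 1 ≤ n)
    (Tsub : Fin n → Subgroup K) (hinj : Function.Injective Tsub)
    (hiso : ∀ i, Nonempty (↥(Tsub i) ≃* T))
    (hnormal : ∀ i, (Tsub i).Normal)
    (hsup : (⨆ i, Tsub i) = ⊤)
    (hindep : iSupIndep Tsub)
    (hmin : ∀ N : Subgroup K, N.Normal → N ≠ ⊥ →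
      (∀ M : Subgroup K, M.Normal → M ≤ N → M = ⊥ ∨ M = N) → ∃ i, N = Tsub i)
    (G : Subgroup (MulAut K))
    (σ : ↥G → Equiv.Perm (Fin n))
    (hσ : ∀ (g : ↥G) (i : Fin n),
      (Tsub i).map (g : MulAut K).toMonoidHom = Tsub (σ g i))
    (hInn : ∀ t ∈ Tsub ⟨0, hn⟩, ∃ g : ↥G,
      (Tsub ⟨0, hn⟩).map (g : MulAut K).toMonoidHom = Tsub ⟨0, hn⟩ ∧
      ∀ x ∈ Tsub ⟨0, hn⟩, (g : MulAut K) x = t * x * t⁻¹)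
    (htrans : ∀ i j : Fin n, ∃ g : ↥G, σ g i = j)
    (hprim : ∀ B : Set (Fin n),
      (∀ g : ↥G, (σ g) '' B = B ∨ Disjoint ((σ g) '' B) B) →
      B.Subsingleton ∨ B = Set.univ) :
    G ⊓ (MulAut.conj : K →* MulAut K).range = ⊥ ∨
    Nonempty (↥(G ⊓ (MulAut.conj : K →* MulAut K).range) ≃* T) ∨
    (MulAut.conj : K →* MulAut K).range ≤ G := by
  classical
  set i₀ : Fin n := ⟨0, hn⟩ with hi₀
  -- the projections
  have hEU := Stmt14.existsUnique_pi (Tsub := Tsub) hnormal hsup hindep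
  choose π hπ huniq' using fun i x => hEU i x
  have hmem : ∀ i x, π i x ∈ Tsub i := fun i x => (hπ i x).1
  have hCmem : ∀ i x, (π i x)⁻¹ * x ∈ Stmt14.C Tsub i := fun i x => (hπ i x).2
  have huniq : ∀ i x t, t ∈ Tsub i → t⁻¹ * x ∈ Stmt14.C Tsub i → t = π i x :=
    fun i x t h1 h2 => huniq' i x t ⟨h1, h2⟩
  have hπmul : ∀ i x y, π i (x * y) = π i x * π i y :=
    fun i x y => Stmt14.pi_mul hmem hCmem huniq hnormal i x y
  set F : Fin n → (K →* K) := fun i => MonoidHom.mk' (fun x => π i x) (fun x y => hπmul i x y)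
    with hF
  have hFapp : ∀ i x, F i x = π i x := fun i x => rfl
  -- sigma facts
  have hσinv : ∀ (g : ↥G) (j : Fin n), σ g⁻¹ (σ g j) = j := by
    intro g j
    apply hinj
    rw [← hσ g⁻¹ (σ g j), ← hσ g j, Subgroup.map_map]
    ext x
    simp only [Subgroup.mem_map, MonoidHom.comp_apply]
    constructor
    · rintro ⟨y, hy, rfl⟩
      simpa using hy
    · intro hx
      exact ⟨x, hx, by simp⟩
  have hσinv' : ∀ (g : ↥G) (j : Fin n), σ g (σ g⁻¹ j) = j := by
    intro g j
    have := hσinv g⁻¹ j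
    rwa [inv_inv] at this
  -- equivariance
  have heqv : ∀ (g : ↥G) (i : Fin n) (x : K), π (σ g i) ((g : MulAut K) x)
      = (g : MulAut K) (π i x) :=
    fun g i x => Stmt14.pi_equivariant hmem hCmem huniq (g : MulAut K) (σ g) (hσ g) i x
  -- N
  set N : Subgroup K := Subgroup.comap (MulAut.conj : K →* MulAut K) G with hNdef
  have hconjg : ∀ (g : ↥G) (x : K), MulAut.conj ((g : MulAut K) x)
      = (g : MulAut K) * MulAut.conj x * (g : MulAut K)⁻¹ := by
    intro g x
    ext y
    simp only [MulAut.conj_apply, MulAut.mul_apply, map_mul, map_inv, MulAut.apply_inv_self]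
  have hNg : ∀ (g : ↥G) (x : K), x ∈ N → (g : MulAut K) x ∈ N := by
    intro g x hx
    have : MulAut.conj ((g : MulAut K) x) ∈ G := by
      rw [hconjg]
      exact mul_mem (mul_mem g.2 hx) (inv_mem g.2)
    exact this
  have hNmap : ∀ g : ↥G, N.map (g : MulAut K).toMonoidHom = N := by
    intro g
    apply le_antisymm
    · rintro y ⟨x, hx, rfl⟩
      exact hNg g x hx
    · intro x hx
      refine ⟨((g⁻¹ : ↥G) : MulAut K) x, hNg g⁻¹ x hx, ?_⟩
      show (g : MulAut K) (((g⁻¹ : ↥G) : MulAut K) x) = x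
      simp
  -- injectivity of conj
  have hcent : ∀ (i : Fin n) (t : K), t ∈ Tsub i → (∀ u ∈ Tsub i, u * t = t * u) → t = 1 := by
    intro i t ht hcomm
    set H : Subgroup K := Subgroup.centralizer (Tsub i : Set K) ⊓ Tsub i with hH
    have hle : H ≤ Tsub i := inf_le_right
    have hconj : ∀ u ∈ Tsub i, ∀ h ∈ H, u * h * u⁻¹ ∈ H := by
      intro u hu h hh
      have h2 : u * h * u⁻¹ = h := by
        rw [Subgroup.mem_centralizer_iff.mp hh.1 u hu]
        group
      rw [h2]; exact hh
    rcases Stmt14.bot_or_eq_of_conj (T := T) i (hiso i) H hle hconj with hbot | htop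
    · have htH : t ∈ H := ⟨Subgroup.mem_centralizer_iff.mpr (fun u hu => hcomm u hu), ht⟩
      rw [hbot] at htH
      exact Subgroup.mem_bot.mp htH
    · exfalso
      obtain ⟨a, b, hab⟩ := Stmt14.exists_noncomm hT i (hiso i).some
      apply hab
      have hbH : (b : K) ∈ H := by rw [htop]; exact b.2
      have hc := Subgroup.mem_centralizer_iff.mp hbH.1 (a : K) a.2
      ext
      push_cast
      exact hc
  have hconjinj : Function.Injective (MulAut.conj : K →* MulAut K) := by
    have hker : ∀ a : K, MulAut.conj a = 1 → a = 1 := by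
      intro a ha
      have hcomm : ∀ y : K, a * y * a⁻¹ = y := by
        intro y
        have := congrArg (fun e : MulAut K => e y) ha
        simpa [MulAut.conj_apply] using this
      have hone : ∀ i, π i a = 1 := by
        intro i
        apply hcent i (π i a) (hmem i a)
        intro u hu
        have h1 : a * u = u * a := by
          have h0 := hcomm u
          calc a * u = (a * u * a⁻¹) * a := by group
          _ = u * a := by rw [h0]
        have h2 := hπmul i a u
        rw [h1] at h2
        have h3 := hπmul i u a
        have h4 : π i a * π i u = π i u * π i a := by rw [← h2, h3]
        rw [Stmt14.pi_of_mem huniq hu] at h4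
        exact h4.symm
      exact Stmt14.eq_one_of_pi hmem hCmem huniq hnormal hsup hn a hone
    intro a b hab
    have h5 : MulAut.conj (a * b⁻¹) = 1 := by rw [map_mul, map_inv, hab]; group
    have h6 := hker _ h5
    exact mul_inv_eq_one.mp h6
  have hM : G ⊓ (MulAut.conj : K →* MulAut K).range = N.map (MulAut.conj : K →* MulAut K) := by
    apply le_antisymm
    · rintro m ⟨hmG, x, rfl⟩
      exact ⟨x, hmG, rfl⟩
    · rintro m ⟨x, hx, rfl⟩
      exact ⟨hx, x, rfl⟩
  -- stabiliser giving inner action on factor i₀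
  have hstab : ∀ t ∈ Tsub i₀, ∃ g : ↥G, σ g i₀ = i₀ ∧
      ∀ x ∈ Tsub i₀, (g : MulAut K) x = t * x * t⁻¹ := by
    intro t ht
    obtain ⟨g, hg1, hg2⟩ := hInn t ht
    exact ⟨g, hinj (by rw [← hσ g i₀, hg1]), hg2⟩
  -- the projected subgroups Q i = π i (N)
  set Q : Fin n → Subgroup K := fun i => N.map (F i) with hQdef
  have hQle : ∀ i, Q i ≤ Tsub i := by
    rintro i y ⟨x, hx, rfl⟩
    exact hmem i x
  have hQmap : ∀ (g : ↥G) (i : Fin n), (Q i).map (g : MulAut K).toMonoidHom = Q (σ g i) := by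
    intro g i
    apply le_antisymm
    · rintro y ⟨q, ⟨x, hx, rfl⟩, rfl⟩
      refine ⟨(g : MulAut K) x, hNg g x hx, ?_⟩
      show π (σ g i) ((g : MulAut K) x) = (g : MulAut K) (π i x)
      exact heqv g i x
    · rintro y ⟨x, hx, rfl⟩
      refine ⟨π i (((g⁻¹ : ↥G) : MulAut K) x), ⟨((g⁻¹ : ↥G) : MulAut K) x, hNg g⁻¹ x hx, rfl⟩, ?_⟩
      show (g : MulAut K) (π i (((g⁻¹ : ↥G) : MulAut K) x)) = F (σ g i) x
      have h1 := heqv g i (((g⁻¹ : ↥G) : MulAut K) x)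
      show (g : MulAut K) (π i (((g⁻¹ : ↥G) : MulAut K) x)) = π (σ g i) x
      rw [← h1]
      congr 1
      simp
  have hTne : ∀ i, Tsub i ≠ ⊥ := fun i => Stmt14.Tsub_ne_bot hT i (hiso i)
  have hQ0 : Q i₀ = ⊥ ∨ Q i₀ = Tsub i₀ := by
    apply Stmt14.bot_or_eq_of_conj (T := T) i₀ (hiso i₀) (Q i₀) (hQle i₀)
    rintro t ht q ⟨x, hx, rfl⟩
    obtain ⟨g, hg1, hg2⟩ := hstab t ht
    refine ⟨(g : MulAut K) x, hNg g x hx, ?_⟩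
    show π i₀ ((g : MulAut K) x) = t * F i₀ x * t⁻¹
    have h1 := heqv g i₀ x
    rw [hg1] at h1
    rw [h1]
    exact hg2 (π i₀ x) (hmem i₀ x)
  have hQtrans : ∀ i, (Q i₀ = ⊥ → Q i = ⊥) ∧ (Q i₀ = Tsub i₀ → Q i = Tsub i) := by
    intro i
    obtain ⟨g, hg⟩ := htrans i₀ i
    constructor
    · intro h
      rw [← hg, ← hQmap g i₀, h, Subgroup.map_bot]
    · intro h
      rw [← hg, ← hQmap g i₀, h]
      exact hσ g i₀
  rcases hQ0 with hbotQ | hfullQ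
  · -- G ∩ Inn(K) trivial
    left
    have hNbot : N = ⊥ := by
      rw [eq_bot_iff]
      intro x hx
      have h1 : x = 1 := by
        apply Stmt14.eq_one_of_pi hmem hCmem huniq hnormal hsup hn
        intro j
        have h2 : π j x ∈ Q j := ⟨x, hx, rfl⟩
        rw [(hQtrans j).1 hbotQ] at h2
        exact Subgroup.mem_bot.mp h2
      rw [h1]; exact Subgroup.mem_bot.mpr rfl
    rw [hM, hNbot, Subgroup.map_bot]
  have hQall : ∀ i, Q i = Tsub i := fun i => (hQtrans i).2 hfullQ
  set R : Fin n → Subgroup K := fun i => N ⊓ Tsub i with hR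
  have hRmap : ∀ (g : ↥G) (i : Fin n), (R i).map (g : MulAut K).toMonoidHom = R (σ g i) := by
    intro g i
    apply le_antisymm
    · rintro y ⟨x, ⟨hx1, hx2⟩, rfl⟩
      refine ⟨hNg g x hx1, ?_⟩
      rw [← hσ g i]
      exact ⟨x, hx2, rfl⟩
    · rintro x ⟨hx1, hx2⟩
      refine ⟨((g⁻¹ : ↥G) : MulAut K) x, ⟨hNg g⁻¹ x hx1, ?_⟩, ?_⟩
      · have h3 := hσ g⁻¹ (σ g i)
        rw [hσinv g i] at h3
        rw [← h3]
        exact ⟨x, hx2, rfl⟩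
      · show (g : MulAut K) (((g⁻¹ : ↥G) : MulAut K) x) = x
        simp
  have hR0 : R i₀ = ⊥ ∨ R i₀ = Tsub i₀ := by
    apply Stmt14.bot_or_eq_of_conj (T := T) i₀ (hiso i₀) (R i₀) inf_le_right
    rintro t ht r hr
    obtain ⟨g, hg1, hg2⟩ := hstab t ht
    have h1 : (g : MulAut K) r ∈ R (σ g i₀) := by
      rw [← hRmap g i₀]
      exact ⟨r, hr, rfl⟩
    rw [hg1] at h1
    rw [← hg2 r hr.2]
    exact h1
  have hRtrans : ∀ i, (R i₀ = ⊥ → R i = ⊥) ∧ (R i₀ = Tsub i₀ → R i = Tsub i) := by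
    intro i
    obtain ⟨g, hg⟩ := htrans i₀ i
    constructor
    · intro h
      rw [← hg, ← hRmap g i₀, h, Subgroup.map_bot]
    · intro h
      rw [← hg, ← hRmap g i₀, h]
      exact hσ g i₀
  rcases hR0 with hbotR | hfullR
  swap
  · -- Inn(K) ≤ G
    right; right
    have hNtop : N = ⊤ := by
      rw [eq_top_iff, ← hsup]
      refine iSup_le fun i => ?_
      have h1 : R i = Tsub i := (hRtrans i).2 hfullR
      rw [← h1]
      exact inf_le_left
    rintro m ⟨x, rfl⟩
    have : x ∈ N := by rw [hNtop]; trivial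
    exact this
  -- diagonal case
  have hπinv : ∀ (i : Fin n) (x : K), π i x⁻¹ = (π i x)⁻¹ := fun i x => map_inv (F i) x
  set Kk : Fin n → Subgroup K := fun i => N ⊓ (F i).ker with hKk
  have hKmem : ∀ (i : Fin n) (x : K), x ∈ Kk i ↔ x ∈ N ∧ π i x = 1 := by
    intro i x
    rw [hKk]
    simp only [Subgroup.mem_inf, MonoidHom.mem_ker]
    exact Iff.rfl
  have hKmap : ∀ (g : ↥G) (i : Fin n), (Kk i).map (g : MulAut K).toMonoidHom = Kk (σ g i) := by
    intro g i
    apply le_antisymm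
    · rintro y ⟨x, hx, rfl⟩
      replace hx := (hKmem _ _).mp hx
      refine (hKmem _ _).mpr ⟨hNg g x hx.1, ?_⟩
      show π (σ g i) ((g : MulAut K) x) = 1
      rw [heqv g i x, hx.2, map_one]
    · intro x hx
      replace hx := (hKmem _ _).mp hx
      refine ⟨((g⁻¹ : ↥G) : MulAut K) x, (hKmem _ _).mpr ⟨hNg g⁻¹ x hx.1, ?_⟩, ?_⟩
      · have h1 := heqv g i (((g⁻¹ : ↥G) : MulAut K) x)
        have h2 : (g : MulAut K) (((g⁻¹ : ↥G) : MulAut K) x) = x := by simp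
        rw [h2] at h1
        have h3 : (g : MulAut K) (π i (((g⁻¹ : ↥G) : MulAut K) x)) = 1 := by
          rw [← h1, hx.2]
        have h4 := congrArg (((g⁻¹ : ↥G) : MulAut K)) h3
        simpa using h4
      · show (g : MulAut K) (((g⁻¹ : ↥G) : MulAut K) x) = x
        simp
  -- conjugation stability of the projections of the kernels
  have hSconj : ∀ (i j : Fin n), ∀ c ∈ Tsub i, ∀ a ∈ (Kk j).map (F i),
      c * a * c⁻¹ ∈ (Kk j).map (F i) := by
    rintro i j c hc a ⟨x, hx, rfl⟩
    replace hx := (hKmem _ _).mp hx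
    have hcQ : c ∈ Q i := by rw [hQall i]; exact hc
    obtain ⟨y, hyN, hyc⟩ := hcQ
    refine ⟨y * x * y⁻¹, (hKmem _ _).mpr ⟨mul_mem (mul_mem hyN hx.1) (inv_mem hyN), ?_⟩, ?_⟩
    · show π j (y * x * y⁻¹) = 1
      rw [hπmul, hπmul, hπinv, hx.2, mul_one, mul_inv_cancel]
    · show π i (y * x * y⁻¹) = c * F i x * c⁻¹
      have hyc' : π i y = c := hyc
      rw [hπmul, hπmul, hπinv, hyc']
      rfl
  have hGoursat : ∀ i j : Fin n, Kk i ≤ Kk j → Kk j ≤ Kk i := by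
    intro i j hij
    have hSle : (Kk j).map (F i) ≤ Tsub i := by
      rintro y ⟨x, hx, rfl⟩
      exact hmem i x
    rcases Stmt14.bot_or_eq_of_conj (T := T) i (hiso i) _ hSle (hSconj i j) with hSbot | hSfull
    · intro x hx
      replace hx := (hKmem _ _).mp hx
      refine (hKmem _ _).mpr ⟨hx.1, ?_⟩
      have h1 : π i x ∈ (Kk j).map (F i) := ⟨x, (hKmem _ _).mpr hx, rfl⟩
      rw [hSbot] at h1
      exact Subgroup.mem_bot.mp h1
    · exfalso
      apply hTne j
      rw [← hQall j, eq_bot_iff]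
      rintro q ⟨y, hyN, rfl⟩
      have h1 : π i y ∈ (Kk j).map (F i) := by rw [hSfull]; exact hmem i y
      obtain ⟨x, hxK, hxv⟩ := h1
      replace hxK := (hKmem _ _).mp hxK
      have h2 : y * x⁻¹ ∈ Kk i := by
        refine (hKmem _ _).mpr ⟨mul_mem hyN (inv_mem hxK.1), ?_⟩
        show π i (y * x⁻¹) = 1
        rw [hπmul, hπinv]
        have hxv' : π i x = π i y := hxv
        rw [hxv', mul_inv_cancel]
      have h3 : y * x⁻¹ ∈ Kk j := hij h2
      have h4 : y ∈ Kk j := by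
        have := mul_mem h3 ((hKmem j x).mpr hxK)
        rwa [inv_mul_cancel_right] at this
      replace h4 := (hKmem _ _).mp h4
      show F j y ∈ (⊥ : Subgroup K)
      rw [Subgroup.mem_bot]
      exact h4.2
  -- the block
  set B : Set (Fin n) := {j | Kk j = Kk i₀} with hB
  have himg : ∀ g : ↥G, (σ g) '' B = {j | Kk j = Kk (σ g i₀)} := by
    intro g
    ext j
    constructor
    · rintro ⟨m, hm, rfl⟩
      have hm' : Kk m = Kk i₀ := hm
      show Kk (σ g m) = Kk (σ g i₀)
      rw [← hKmap g m, ← hKmap g i₀, hm']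
    · intro hj
      have hj' : Kk j = Kk (σ g i₀) := hj
      refine ⟨σ g⁻¹ j, ?_, hσinv' g j⟩
      show Kk (σ g⁻¹ j) = Kk i₀
      rw [← hKmap g⁻¹ j, hj', hKmap g⁻¹ (σ g i₀), hσinv g i₀]
  have hblock : ∀ g : ↥G, (σ g) '' B = B ∨ Disjoint ((σ g) '' B) B := by
    intro g
    by_cases hc : Kk (σ g i₀) = Kk i₀
    · left
      rw [himg g]
      ext j
      simp only [hB, Set.mem_setOf_eq, hc]
    · right
      rw [himg g, Set.disjoint_left]
      rintro j hj1 hj2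
      have hj1' : Kk j = Kk (σ g i₀) := hj1
      have hj2' : Kk j = Kk i₀ := hj2
      exact hc (hj1'.symm.trans hj2')
  rcases hprim B hblock with hsub | huniv
  · -- impossible
    exfalso
    have hi₀B : i₀ ∈ B := by show Kk i₀ = Kk i₀; rfl
    have hBne : ∀ j, j ≠ i₀ → Kk j ≠ Kk i₀ := by
      intro j hj hEq
      exact hj (hsub (show j ∈ B from hEq) hi₀B)
    have hKfull : ∀ j, j ≠ i₀ → (Kk j).map (F i₀) = Tsub i₀ := by
      intro j hj
      have hSle : (Kk j).map (F i₀) ≤ Tsub i₀ := by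
        rintro y ⟨x, hx, rfl⟩
        exact hmem i₀ x
      rcases Stmt14.bot_or_eq_of_conj (T := T) i₀ (hiso i₀) _ hSle (hSconj i₀ j) with hSbot | hSfull
      · exfalso
        apply hBne j hj
        apply le_antisymm
        · intro x hx
          replace hx := (hKmem _ _).mp hx
          refine (hKmem _ _).mpr ⟨hx.1, ?_⟩
          have h1 : π i₀ x ∈ (Kk j).map (F i₀) := ⟨x, (hKmem _ _).mpr hx, rfl⟩
          rw [hSbot] at h1
          exact Subgroup.mem_bot.mp h1
        · apply hGoursat
          intro x hx
          replace hx := (hKmem _ _).mp hx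
          refine (hKmem _ _).mpr ⟨hx.1, ?_⟩
          have h1 : π i₀ x ∈ (Kk j).map (F i₀) := ⟨x, (hKmem _ _).mpr hx, rfl⟩
          rw [hSbot] at h1
          exact Subgroup.mem_bot.mp h1
      · exact hSfull
    set L : Finset (Fin n) → Subgroup K := fun S => N ⊓ ⨅ j ∈ S, (F j).ker with hL
    have hLmem : ∀ (S : Finset (Fin n)) (x : K),
        x ∈ L S ↔ x ∈ N ∧ ∀ j ∈ S, π j x = 1 := by
      intro S x
      rw [hL]
      simp only [Subgroup.mem_inf, Subgroup.mem_iInf, MonoidHom.mem_ker]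
      exact Iff.rfl
    have hπcomm : ∀ (j : Fin n) (x y : K),
        π j (x * y * x⁻¹ * y⁻¹) = π j x * π j y * (π j x)⁻¹ * (π j y)⁻¹ := by
      intro j x y
      rw [hπmul, hπmul, hπmul, hπinv, hπinv]
    have hind : ∀ S : Finset (Fin n), i₀ ∉ S → Tsub i₀ ≤ (L S).map (F i₀) := by
      intro S
      induction S using Finset.induction_on with
      | empty =>
        intro _ c hc
        have h1 : c ∈ Q i₀ := by rw [hQall i₀]; exact hc
        obtain ⟨x, hxN, hxv⟩ := h1
        exact ⟨x, (hLmem _ _).mpr ⟨hxN, by simp⟩, hxv⟩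
      | @insert a S ha IH =>
        intro hins
        have hai₀ : a ≠ i₀ := fun h => hins (h ▸ Finset.mem_insert_self a S)
        have hSi₀ : i₀ ∉ S := fun h => hins (Finset.mem_insert_of_mem h)
        apply Stmt14.le_of_commutators (T := T) hT i₀ (hiso i₀)
        · rintro y ⟨x, hx, rfl⟩
          exact hmem i₀ x
        · intro c hc d hd
          obtain ⟨x, hxL, hxv⟩ := IH hSi₀ hc
          replace hxL := (hLmem _ _).mp hxL
          have hd' : d ∈ (Kk a).map (F i₀) := by rw [hKfull a hai₀]; exact hd
          obtain ⟨y, hyK, hyv⟩ := hd'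
          replace hyK := (hKmem _ _).mp hyK
          refine ⟨x * y * x⁻¹ * y⁻¹, (hLmem _ _).mpr ⟨?_, ?_⟩, ?_⟩
          · exact mul_mem (mul_mem (mul_mem hxL.1 hyK.1) (inv_mem hxL.1)) (inv_mem hyK.1)
          · intro j hjmem
            rcases Finset.mem_insert.mp hjmem with rfl | hjS
            · rw [hπcomm, hyK.2, mul_one, inv_one, mul_inv_cancel, one_mul]
            · rw [hπcomm, hxL.2 j hjS, one_mul, inv_one]
              group
          · show π i₀ (x * y * x⁻¹ * y⁻¹) = c * d * c⁻¹ * d⁻¹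
            have hxv' : π i₀ x = c := hxv
            have hyv' : π i₀ y = d := hyv
            rw [hπcomm, hxv', hyv']
    have hLbot : L (Finset.univ.erase i₀) = ⊥ := by
      rw [eq_bot_iff]
      intro x hx
      replace hx := (hLmem _ _).mp hx
      have h1 : x ∈ Tsub i₀ := by
        apply Stmt14.mem_of_pi hmem hCmem huniq hnormal hsup
        intro j hj
        exact hx.2 j (Finset.mem_erase.mpr ⟨hj, Finset.mem_univ j⟩)
      have h2 : x ∈ R i₀ := ⟨hx.1, h1⟩
      rw [hbotR] at h2
      exact h2
    have h3 := hind (Finset.univ.erase i₀) (by simp)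
    rw [hLbot, Subgroup.map_bot, le_bot_iff] at h3
    exact hTne i₀ h3
  · -- all kernels equal : G ∩ Inn(K) ≅ T
    right; left
    have hK0 : Kk i₀ = ⊥ := by
      rw [eq_bot_iff]
      intro x hx
      have h1 : x = 1 := by
        apply Stmt14.eq_one_of_pi hmem hCmem huniq hnormal hsup hn
        intro j
        have hjB : Kk j = Kk i₀ := by
          have : j ∈ B := by rw [huniv]; trivial
          exact this
        have h2 : x ∈ Kk j := by rw [hjB]; exact hx
        exact ((hKmem j x).mp h2).2
      rw [h1]
      exact Subgroup.mem_bot.mpr rfl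
    set φ : ↥N →* K := (F i₀).comp N.subtype with hφ
    have hφinj : Function.Injective φ := by
      rw [injective_iff_map_eq_one]
      intro a ha
      have h1 : (a : K) ∈ Kk i₀ := (hKmem _ _).mpr ⟨a.2, ha⟩
      rw [hK0] at h1
      exact Subtype.ext (Subgroup.mem_bot.mp h1)
    have hφrange : φ.range = Tsub i₀ := by
      rw [← hQall i₀]
      ext y
      constructor
      · rintro ⟨a, rfl⟩
        exact ⟨(a : K), a.2, rfl⟩
      · rintro ⟨x, hx, rfl⟩
        exact ⟨⟨x, hx⟩, rfl⟩
    have e1 : ↥N ≃* ↥(Tsub i₀) :=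
      (MonoidHom.ofInjective hφinj).trans (MulEquiv.subgroupCongr hφrange)
    have e2 : ↥(G ⊓ (MulAut.conj : K →* MulAut K).range) ≃* ↥N :=
      (MulEquiv.subgroupCongr hM).trans (N.equivMapOfInjective _ hconjinj).symm
    exact ⟨(e2.trans e1).trans (hiso i₀).some⟩
end

section
/- Let T be a nonabelian finite simple group, let H be a finite group, and let N₁,…,N_n be pairwise distinct normal subgroups of H such that H/N_i ≅ T for every i ∈ {1,…,n}. Then H/(N₁ ∩ ⋯ ∩ N_n) ≅ T^n. -/
open Subgroup

section Aux

variable {T : Type*} [Group T] [IsSimpleGroup T]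

lemma center_eq_bot_of_nonabelian (hT : ∃ a b : T, a * b ≠ b * a) :
    Subgroup.center T = ⊥ := by
  rcases (Subgroup.center T).normal_of_characteristic.eq_bot_or_eq_top with h | h
  · exact h
  · obtain ⟨a, b, hab⟩ := hT
    exact absurd ((Subgroup.mem_center_iff.mp (h ▸ Subgroup.mem_top a)) b).symm hab

lemma mulSingle_mem_of_normal {m : ℕ} (hT : ∃ a b : T, a * b ≠ b * a)
    (M : Subgroup (Fin m → T)) (hM : M.Normal) {x : Fin m → T} (hx : x ∈ M)
    {i : Fin m} (hxi : x i ≠ 1) (t : T) : Pi.mulSingle i t ∈ M := by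
  classical
  let S : Subgroup T := M.comap (MonoidHom.mulSingle (fun _ : Fin m => T) i)
  have hS : ∀ s : T, s ∈ S ↔ Pi.mulSingle i s ∈ M := fun s => Iff.rfl
  have hSnormal : S.Normal := by
    constructor
    intro a ha g
    have ha' : Pi.mulSingle i a ∈ M := (hS a).mp ha
    have h1 : (Pi.mulSingle i g) * (Pi.mulSingle i a) * (Pi.mulSingle i g)⁻¹ ∈ M :=
      hM.conj_mem (Pi.mulSingle i a) ha' (Pi.mulSingle i g)
    rw [hS]
    have : (Pi.mulSingle i (g * a * g⁻¹) : Fin m → T) =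
        (Pi.mulSingle i g) * (Pi.mulSingle i a) * (Pi.mulSingle i g)⁻¹ := by
      funext j
      by_cases hj : j = i
      · subst hj; simp
      · simp [Pi.mulSingle_apply, hj]
    rw [this]; exact h1
  -- find a noncommuting partner for x i
  have hxc : x i ∉ Subgroup.center T := by
    rw [center_eq_bot_of_nonabelian hT, Subgroup.mem_bot]
    exact hxi
  rw [Subgroup.mem_center_iff] at hxc
  push_neg at hxc
  obtain ⟨s, hs⟩ := hxc
  -- the commutator
  have hcomm : x * (Pi.mulSingle i s) * x⁻¹ * (Pi.mulSingle i s)⁻¹ ∈ M := by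
    have h2 : (Pi.mulSingle i s) * x⁻¹ * (Pi.mulSingle i s)⁻¹ ∈ M :=
      hM.conj_mem _ (M.inv_mem hx) _
    have := M.mul_mem hx h2
    simpa [mul_assoc] using this
  have hval : x * (Pi.mulSingle i s) * x⁻¹ * (Pi.mulSingle i s)⁻¹ =
      Pi.mulSingle i (x i * s * (x i)⁻¹ * s⁻¹) := by
    funext j
    by_cases hj : j = i
    · subst hj; simp
    · simp [Pi.mulSingle_apply, hj]
  have hmem : (x i * s * (x i)⁻¹ * s⁻¹) ∈ S := by
    rw [hS, ← hval]; exact hcomm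
  have hne : x i * s * (x i)⁻¹ * s⁻¹ ≠ 1 := by
    intro h
    apply hs
    have := mul_eq_one_iff_eq_inv.mp h
    rw [inv_inv] at this
    have : x i * s * (x i)⁻¹ = s := this
    calc s * x i = (x i * s * (x i)⁻¹) * x i := by rw [this]
      _ = x i * s := by group
  have hSne : S ≠ ⊥ := by
    intro h
    rw [h, Subgroup.mem_bot] at hmem
    exact hne hmem
  have : S = ⊤ := (hSnormal.eq_bot_or_eq_top).resolve_left hSne
  have : t ∈ S := this ▸ Subgroup.mem_top t
  rwa [hS] at this

lemma exists_coord_eq_one {m : ℕ} (hT : ∃ a b : T, a * b ≠ b * a)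
    (M : Subgroup (Fin m → T)) (hM : M.Normal) (hMne : M ≠ ⊤) :
    ∃ i, ∀ x ∈ M, x i = 1 := by
  classical
  by_contra h
  push_neg at h
  apply hMne
  rw [eq_top_iff']
  intro f
  have hsingle : ∀ (i : Fin m) (t : T), Pi.mulSingle i t ∈ M := by
    intro i t
    obtain ⟨x, hxM, hxi⟩ := h i
    exact mulSingle_mem_of_normal hT M hM hxM hxi t
  have hprod := Finset.noncommProd_mulSingle f
  rw [← hprod]
  exact M.noncommProd_mem _ (fun i _ => hsingle i (f i))

end Aux

section Main

variable {T H : Type*} [Group T] [Group H]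

/-- The canonical map to the product of quotients, composed with given equivalences. -/
def toPiT {n : ℕ} (N : Fin n → Subgroup H) [∀ i, (N i).Normal]
    (e : ∀ i, (H ⧸ N i) ≃* T) : H →* (Fin n → T) :=
  Pi.monoidHom (fun i => (e i).toMonoidHom.comp (QuotientGroup.mk' (N i)))

lemma toPiT_apply {n : ℕ} (N : Fin n → Subgroup H) [∀ i, (N i).Normal]
    (e : ∀ i, (H ⧸ N i) ≃* T) (h : H) (i : Fin n) :
    toPiT N e h i = e i (QuotientGroup.mk h) := rfl

lemma toPiT_ker {n : ℕ} (N : Fin n → Subgroup H) [∀ i, (N i).Normal]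
    (e : ∀ i, (H ⧸ N i) ≃* T) : (toPiT N e).ker = ⨅ i, N i := by
  ext h
  simp only [MonoidHom.mem_ker, Subgroup.mem_iInf, funext_iff, Pi.one_apply]
  refine forall_congr' fun i => ?_
  rw [toPiT_apply, EmbeddingLike.map_eq_one_iff, QuotientGroup.eq_one_iff]

lemma key_surj [Finite T] [IsSimpleGroup T] (hT : ∃ a b : T, a * b ≠ b * a) [Finite H] :
    ∀ (n : ℕ) (N : Fin n → Subgroup H), Function.Injective N →
      ∀ [∀ i, (N i).Normal] (e : ∀ i, (H ⧸ N i) ≃* T),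
      Function.Surjective (toPiT N e) := by
  intro n
  induction n with
  | zero =>
    intro N _ _ e f
    exact ⟨1, funext fun i => i.elim0⟩
  | succ n IH =>
    intro N hinj inst e f
    set N' : Fin n → Subgroup H := fun i => N i.castSucc with hN'def
    have hinj' : Function.Injective N' := fun i j hij =>
      Fin.castSucc_injective n (hinj hij)
    have inst' : ∀ i, (N' i).Normal := fun i => inst _
    set e' : ∀ i, (H ⧸ N' i) ≃* T := fun i => e i.castSucc with he'def
    have IH' := IH N' hinj' e'
    set Φ : H →* (Fin n → T) := toPiT N' e' with hΦdef
    have hker : Φ.ker = ⨅ i, N' i := toPiT_ker N' e'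
    set L : Subgroup H := N (Fin.last n) with hLdef
    have hLnormal : L.Normal := inst _
    set eL : (H ⧸ L) ≃* T := e (Fin.last n) with heLdef
    have hTnt : Nontrivial T := inferInstance
    have hQnt : Nontrivial (H ⧸ L) := eL.toEquiv.nontrivial
    have hLne : L ≠ ⊤ := by
      intro hL
      rw [hL] at hQnt
      have hss : Subsingleton (H ⧸ (⊤ : Subgroup H)) := QuotientGroup.subsingleton_quotient_top
      exact (not_nontrivial (H ⧸ (⊤ : Subgroup H))) hQnt
    -- Step 1: ¬ Φ.ker ≤ L
    have hnotle : ¬ Φ.ker ≤ L := by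
      intro hle
      have hM'normal : (L.map Φ).Normal := hLnormal.map Φ IH'
      have hM'ne : L.map Φ ≠ ⊤ := by
        intro htop
        apply hLne
        rw [eq_top_iff']
        intro h
        have hmem : Φ h ∈ L.map Φ := htop ▸ Subgroup.mem_top _
        obtain ⟨l, hl, hlh⟩ := hmem
        have hker' : l⁻¹ * h ∈ Φ.ker := by
          rw [MonoidHom.mem_ker, map_mul, map_inv, hlh]
          group
        have : h = l * (l⁻¹ * h) := by group
        rw [this]
        exact L.mul_mem hl (hle hker')
      obtain ⟨i, hi⟩ := exists_coord_eq_one hT (L.map Φ) hM'normal hM'ne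
      have hLN : L ≤ N' i := by
        intro h hh
        have : Φ h i = 1 := hi _ ⟨h, hh, rfl⟩
        rw [toPiT_apply, EmbeddingLike.map_eq_one_iff, QuotientGroup.eq_one_iff] at this
        exact this
      -- cardinalities force equality
      have hcardL : Nat.card (H ⧸ L) = Nat.card T := Nat.card_congr eL.toEquiv
      have hcardN : Nat.card (H ⧸ N' i) = Nat.card T := Nat.card_congr (e' i).toEquiv
      have h1 := Subgroup.card_eq_card_quotient_mul_card_subgroup L
      have h2 := Subgroup.card_eq_card_quotient_mul_card_subgroup (N' i)
      have hcards : Nat.card (N' i) ≤ Nat.card L := by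
        have : Nat.card (H ⧸ L) * Nat.card L = Nat.card (H ⧸ N' i) * Nat.card (N' i) := by
          rw [← h1, ← h2]
        rw [hcardL, hcardN] at this
        have hpos : 0 < Nat.card T := Nat.card_pos
        exact le_of_eq (Nat.eq_of_mul_eq_mul_left hpos this).symm
      have : L = N' i := Subgroup.eq_of_le_of_card_ge hLN hcards
      exact (Fin.castSucc_lt_last i).ne' (hinj this)
    obtain ⟨k, hk, hkL⟩ := SetLike.not_le_iff_exists.mp hnotle
    -- Step 2: the image of Φ.ker in H ⧸ L is everything
    have hsimpleQ : IsSimpleGroup (H ⧸ L) :=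
      IsSimpleGroup.isSimpleGroup_of_surjective eL.symm.toMonoidHom eL.symm.surjective
    have hKmap : (Φ.ker).map (QuotientGroup.mk' L) = ⊤ := by
      have hnormal : ((Φ.ker).map (QuotientGroup.mk' L)).Normal :=
        (MonoidHom.normal_ker Φ).map _ (QuotientGroup.mk'_surjective L)
      rcases hnormal.eq_bot_or_eq_top with hbot | htop
      · exfalso
        have : QuotientGroup.mk' L k ∈ (Φ.ker).map (QuotientGroup.mk' L) :=
          ⟨k, hk, rfl⟩
        rw [hbot, Subgroup.mem_bot] at this
        exact hkL ((QuotientGroup.eq_one_iff k).mp this)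
      · exact htop
    -- Step 3: construct the preimage
    obtain ⟨x, hx⟩ := IH' (fun i => f i.castSucc)
    have : (QuotientGroup.mk x)⁻¹ * eL.symm (f (Fin.last n)) ∈
        (Φ.ker).map (QuotientGroup.mk' L) := hKmap ▸ Subgroup.mem_top _
    obtain ⟨kk, hkk, hkkval⟩ := this
    refine ⟨x * kk, funext fun i => ?_⟩
    refine Fin.lastCases ?_ ?_ i
    · show e (Fin.last n) (QuotientGroup.mk (x * kk)) = f (Fin.last n)
      have : (QuotientGroup.mk (x * kk) : H ⧸ L) = eL.symm (f (Fin.last n)) := by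
        have hmk : (QuotientGroup.mk kk : H ⧸ L) =
            (QuotientGroup.mk x)⁻¹ * eL.symm (f (Fin.last n)) := hkkval
        rw [QuotientGroup.mk_mul, hmk]
        group
      rw [show (QuotientGroup.mk (x * kk) : H ⧸ N (Fin.last n)) =
        (QuotientGroup.mk (x * kk) : H ⧸ L) from rfl, this]
      exact eL.apply_symm_apply _
    · intro i
      show toPiT N e (x * kk) i.castSucc = f i.castSucc
      have h1 : toPiT N e (x * kk) i.castSucc = Φ (x * kk) i := rfl
      rw [h1, map_mul]
      have hkk1 : Φ kk i = 1 := by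
        have : Φ kk = 1 := MonoidHom.mem_ker.mp hkk
        rw [this]; rfl
      have hx1 : Φ x i = f i.castSucc := congrFun hx i
      rw [Pi.mul_apply, hx1, hkk1, mul_one]

end Main

/-- The infimum of a family of normal subgroups is normal. -/
instance iInf_normal_of_forall_normal {H : Type*} [Group H] {ι : Sort*}
    (N : ι → Subgroup H) [∀ i, (N i).Normal] : (⨅ i, N i).Normal where
  conj_mem x hx g := by
    rw [Subgroup.mem_iInf] at hx ⊢
    exact fun i => Subgroup.Normal.conj_mem inferInstance x (hx i) g

/-- Let `T` be a nonabelian finite simple group, let `H` be a finite group, and let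
`N₁,…,N_n` be pairwise distinct normal subgroups of `H` such that `H/Nᵢ ≅ T` for every
`i`. Then `H/(N₁ ∩ ⋯ ∩ N_n) ≅ T^n`. -/
theorem stmt_15 {T H : Type*} [Group T] [Finite T] [IsSimpleGroup T]
    (hT : ∃ a b : T, a * b ≠ b * a) [Group H] [Finite H] {n : ℕ}
    (N : Fin n → Subgroup H) (hinj : Function.Injective N)
    [∀ i, (N i).Normal]
    (hquot : ∀ i, Nonempty ((H ⧸ N i) ≃* T)) :
    Nonempty ((H ⧸ ⨅ i, N i) ≃* (Fin n → T)) := by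
  have e : ∀ i, (H ⧸ N i) ≃* T := fun i => (hquot i).some
  have hsurj : Function.Surjective (toPiT N e) := key_surj hT n N hinj e
  have hker : (toPiT N e).ker = ⨅ i, N i := toPiT_ker N e
  exact ⟨(QuotientGroup.quotientMulEquivOfEq hker.symm).trans
    (QuotientGroup.quotientKerEquivOfSurjective _ hsurj)⟩
end
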